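/- arXiv:2410.04787 — 6 statements merged into one kernel-verified Lean document; each statement's English description precedes it below -/
import Mathlib

section
/- Fix ε > 0 and μ > 0, and let A = max_{i=1,…,I} a·c_i·I/(a·c_i·(I−1)+1). Suppose σ ≥ A·μ/ε. Then for any finite number of iterations K, Algorithm 2 with a single noise draw is ε-differentially private: for any two demand vectors d, d′ ∈ ℝ^I that are μ-adjacent (i.e., d_j = d′_j for all j except one index i₀ and |d_{i₀} − d′_{i₀}| ≤ μ), with β(d), β(d′) the corresponding coefficient vectors, any deterministic initial state y(0) ∈ ℝ^{I²}, and every Borel set S ⊆ ℝ^{I²}, one has ℙ[Q^K·y(0) + α·(Σ_{j=0}^{K−1} Q^j)·F·(β(d)+γ) ∈ S] ≤ exp(ε)·ℙ[Q^K·y(0) + α·(Σ_{j=0}^{K−1} Q^j)·F·(β(d′)+γ) ∈ S], where γ ∈ ℝ^I has independent components γ_i ~ Lap(0, 2σ²). -/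
open Matrix MeasureTheory ProbabilityTheory Filter Finset
open scoped Kronecker ENNReal Topology

noncomputable section

/-- Coefficient `β_i = a c_i d_i I / (a c_i (I-1) + 1)`. -/
def betaCoef (I : ℕ) (a : ℝ) (c d : Fin I → ℝ) (i : Fin I) : ℝ :=
  a * c i * d i * (I : ℝ) / (a * c i * ((I : ℝ) - 1) + 1)

/-- Coefficient `μ_{ij}` (with `μ_{ii} = 0`). -/
def muCoef (I : ℕ) (a : ℝ) (c : Fin I → ℝ) (i j : Fin I) : ℝ :=
  if j = i then 0
  else (2 * a * c i * ((I : ℝ) - 1) - ((I : ℝ) - 2)) /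
    (2 * ((I : ℝ) - 1) * (a * c i * ((I : ℝ) - 1) + 1))

/-- Vector `f_i = e_i - (μ_{i1}, …, μ_{iI})ᵀ`. -/
def fvec (I : ℕ) (a : ℝ) (c : Fin I → ℝ) (i : Fin I) : Fin I → ℝ :=
  fun j => (if j = i then (1 : ℝ) else 0) - muCoef I a c i j

/-- Block-diagonal `I² × I` matrix whose `i`-th diagonal block is the column vector `f i`. -/
def blockF (I : ℕ) (f : Fin I → Fin I → ℝ) : Matrix (Fin I × Fin I) (Fin I) ℝ :=
  Matrix.of fun p j => if p.1 = j then f p.1 p.2 else 0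

/-- Weighted graph Laplacian `W̃ = ω (diag(deg) - W)`. -/
def lap (I : ℕ) (ω : ℝ) (W : Matrix (Fin I) (Fin I) ℝ) : Matrix (Fin I) (Fin I) ℝ :=
  ω • (Matrix.diagonal (fun i => ∑ j, W i j) - W)

/-- Iteration matrix `Q = I_{I²} - W̃ ⊗ I_I - α F Fᵀ`. -/
def Qmat (I : ℕ) (a ω α : ℝ) (c : Fin I → ℝ) (W : Matrix (Fin I) (Fin I) ℝ) :
    Matrix (Fin I × Fin I) (Fin I × Fin I) ℝ :=
  1 - (lap I ω W ⊗ₖ (1 : Matrix (Fin I) (Fin I) ℝ))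
    - α • (blockF I (fvec I a c) * (blockF I (fvec I a c))ᵀ)

/-- Spectral radius of a real matrix: supremum of absolute values of its (real) spectrum. -/
def specRad {n : Type*} [Fintype n] [DecidableEq n] (M : Matrix n n ℝ) : ℝ :=
  sSup (abs '' spectrum ℝ M)

/-- Product Laplace density with location `β` and scale `σ`. -/
def lapDensity (n : ℕ) (σ : ℝ) (β : Fin n → ℝ) (z : Fin n → ℝ) : ℝ :=
  ∏ i, (1 / (2 * σ)) * Real.exp (-|z i - β i| / σ)

/-- Law of `β + γ` where `γ` has i.i.d. `Lap(0, 2σ²)` components. -/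
def lapMeasure (n : ℕ) (σ : ℝ) (β : Fin n → ℝ) : Measure (Fin n → ℝ) :=
  volume.withDensity (fun z => ENNReal.ofReal (lapDensity n σ β z))

/-- Payoff `Γ_i(b)`. -/
def payoff (I : ℕ) (a : ℝ) (c d : Fin I → ℝ) (i : Fin I) (b : Fin I → ℝ) : ℝ :=
  -(1/2) * b i ^ 2 + betaCoef I a c d i * b i
    + ∑ j ∈ Finset.univ.erase i, muCoef I a c i j * (b i * b j)

/-- Original utility `U_i(b)`. -/
def Upay (I : ℕ) (a : ℝ) (c d : Fin I → ℝ) (i : Fin I) (b : Fin I → ℝ) : ℝ :=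
  -(c i) * (d i + (∑ j, b j) / (I : ℝ) - b i) ^ 2
    - ((∑ j, b j) / ((I : ℝ) * a)) * (b i - (∑ j, b j) / (I : ℝ))



lemma lapDensity_meas (n : ℕ) (σ : ℝ) (β : Fin n → ℝ) : Measurable (lapDensity n σ β) := by
  apply Finset.measurable_prod
  intro i _
  exact (measurable_const.mul (Measurable.exp (by fun_prop)))

lemma lapDensity_nonneg (n : ℕ) {σ : ℝ} (hσ : 0 < σ) (β z : Fin n → ℝ) :
    0 ≤ lapDensity n σ β z := by
  apply Finset.prod_nonneg
  intro i _
  positivity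

lemma lapDensity_shift_le (n : ℕ) {σ : ℝ} (hσ : 0 < σ) (δ z : Fin n → ℝ) :
    lapDensity n σ 0 (z - δ) ≤ Real.exp ((∑ i, |δ i|) / σ) * lapDensity n σ 0 z := by
  have h : Real.exp ((∑ i, |δ i|) / σ) = ∏ i, Real.exp (|δ i| / σ) := by
    rw [← Real.exp_sum, Finset.sum_div]
  rw [lapDensity, lapDensity, h, ← Finset.prod_mul_distrib]
  apply Finset.prod_le_prod
  · intro i _; positivity
  · intro i _
    have hz : ((z - δ) i : ℝ) = z i - δ i := rfl
    rw [hz, Pi.zero_apply, sub_zero, ← mul_assoc, mul_comm (Real.exp (|δ i| / σ)) (1 / (2*σ)),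
      mul_assoc, ← Real.exp_add]
    apply mul_le_mul_of_nonneg_left _ (by positivity)
    apply Real.exp_le_exp.mpr
    rw [sub_zero, ← add_div, div_le_div_iff_of_pos_right hσ]
    have := abs_sub_abs_le_abs_sub (z i) (δ i)
    linarith

lemma lap_shift (n : ℕ) {σ ε : ℝ} (hσ : 0 < σ) (δ : Fin n → ℝ)
    (hδ : ∑ i, |δ i| ≤ σ * ε) (T : Set (Fin n → ℝ)) (hT : MeasurableSet T) :
    lapMeasure n σ 0 ((fun z => z + δ) ⁻¹' T) ≤ ENNReal.ofReal (Real.exp ε) * lapMeasure n σ 0 T := by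
  have hf0 : Measurable (fun z => ENNReal.ofReal (lapDensity n σ 0 z)) :=
    (lapDensity_meas n σ 0).ennreal_ofReal
  have hTpre : MeasurableSet ((fun z => z + δ) ⁻¹' T) :=
    (measurable_add_const δ) hT
  rw [lapMeasure, withDensity_apply _ hTpre, withDensity_apply _ hT]
  set g : (Fin n → ℝ) → ℝ≥0∞ := fun y => ENNReal.ofReal (lapDensity n σ 0 (y - δ)) with hg
  have hgmeas : Measurable g :=
    ((lapDensity_meas n σ 0).comp (measurable_sub_const δ)).ennreal_ofReal
  have key : ∫⁻ z in (fun z => z + δ) ⁻¹' T, ENNReal.ofReal (lapDensity n σ 0 z) ∂volume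
      = ∫⁻ y in T, g y ∂volume := by
    rw [← lintegral_indicator hTpre, ← lintegral_indicator hT]
    have hcomp : ∀ z, ((fun z => z + δ) ⁻¹' T).indicator (fun z => ENNReal.ofReal (lapDensity n σ 0 z)) z
        = (T.indicator g) (z + δ) := by
      intro z
      by_cases h : z + δ ∈ T
      · have h' : z ∈ (fun z => z + δ) ⁻¹' T := h
        rw [Set.indicator_of_mem h', Set.indicator_of_mem h, hg]
        simp
      · have h' : z ∉ (fun z => z + δ) ⁻¹' T := h
        rw [Set.indicator_of_notMem h', Set.indicator_of_notMem h]
    simp only [hcomp]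
    exact (measurePreserving_add_right volume δ).lintegral_comp (hgmeas.indicator hT)
  rw [key]
  have hratio : ∀ y, g y ≤ ENNReal.ofReal (Real.exp ε) * ENNReal.ofReal (lapDensity n σ 0 y) := by
    intro y
    rw [hg, ← ENNReal.ofReal_mul (Real.exp_nonneg ε)]
    apply ENNReal.ofReal_le_ofReal
    calc lapDensity n σ 0 (y - δ) ≤ Real.exp ((∑ i, |δ i|) / σ) * lapDensity n σ 0 y :=
          lapDensity_shift_le n hσ δ y
      _ ≤ Real.exp ε * lapDensity n σ 0 y := by
          apply mul_le_mul_of_nonneg_right _ (lapDensity_nonneg n hσ 0 y)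
          apply Real.exp_le_exp.mpr
          rw [div_le_iff₀ hσ]
          linarith
  calc ∫⁻ y in T, g y ∂volume ≤ ∫⁻ y in T, ENNReal.ofReal (Real.exp ε) * ENNReal.ofReal (lapDensity n σ 0 y) ∂volume :=
        lintegral_mono fun y => hratio y
    _ = ENNReal.ofReal (Real.exp ε) * ∫⁻ y in T, ENNReal.ofReal (lapDensity n σ 0 y) ∂volume :=
        lintegral_const_mul _ hf0

/-- ε-differential privacy of Algorithm 2 with a single noise draw.
If `σ ≥ A μ / ε` with `A = max_i a c_i I/(a c_i (I-1) + 1)`, then for any finite number of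
iterations `K`, any deterministic initial state `y(0)`, any pair of `μ`-adjacent demand
vectors `d, d'`, and every Borel set `S`,
`ℙ[Q^K y(0) + α (∑_{j<K} Q^j) F (β(d) + γ) ∈ S]
  ≤ exp(ε) ℙ[Q^K y(0) + α (∑_{j<K} Q^j) F (β(d') + γ) ∈ S]`,
where `γ` has independent `Lap(0, 2σ²)` components. -/
theorem stmt_0 (I : ℕ) (hI : 2 ≤ I) (a : ℝ) (ha : 0 < a)
    (c : Fin I → ℝ) (hc : ∀ i, 0 < c i)
    (W : Matrix (Fin I) (Fin I) ℝ) (hWsym : W.IsSymm) (hWdiag : ∀ i, W i i = 0)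
    (hW01 : ∀ i j, W i j = 0 ∨ W i j = 1)
    (ω : ℝ) (hω0 : 0 ≤ ω) (hω1 : ∀ i, ω ≤ 1 / (1 + ∑ j, W i j))
    (α : ℝ)
    (ε μadj σ : ℝ) (hε : 0 < ε) (hμ : 0 < μadj)
    (A : ℝ)
    (hAub : ∀ i, a * c i * (I : ℝ) / (a * c i * ((I : ℝ) - 1) + 1) ≤ A)
    (hAmem : ∃ i, a * c i * (I : ℝ) / (a * c i * ((I : ℝ) - 1) + 1) = A)
    (hσ : A * μadj / ε ≤ σ)
    (K : ℕ)
    {Ω : Type*} [MeasurableSpace Ω] (P : Measure Ω) [IsProbabilityMeasure P]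
    (γ : Ω → Fin I → ℝ) (hγmeas : Measurable γ)
    (hγlaw : Measure.map γ P = lapMeasure I σ 0)
    (d d' : Fin I → ℝ) (i₀ : Fin I)
    (hadj₁ : ∀ j, j ≠ i₀ → d j = d' j) (hadj₂ : |d i₀ - d' i₀| ≤ μadj)
    (y0 : Fin I × Fin I → ℝ)
    (S : Set (Fin I × Fin I → ℝ)) (hS : MeasurableSet S) :
    P {w | (Qmat I a ω α c W ^ K) *ᵥ y0
        + α • ((∑ j ∈ Finset.range K, Qmat I a ω α c W ^ j) * blockF I (fvec I a c))
            *ᵥ (betaCoef I a c d + γ w) ∈ S}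
      ≤ ENNReal.ofReal (Real.exp ε)
        * P {w | (Qmat I a ω α c W ^ K) *ᵥ y0
            + α • ((∑ j ∈ Finset.range K, Qmat I a ω α c W ^ j) * blockF I (fvec I a c))
                *ᵥ (betaCoef I a c d' + γ w) ∈ S} := by
  
  simp only [← Matrix.smul_mulVec]
  -- abbreviations
  set M := α • ((∑ j ∈ Finset.range K, Qmat I a ω α c W ^ j) * blockF I (fvec I a c)) with hM
  set v := (Qmat I a ω α c W ^ K) *ᵥ y0 with hv
  set δ : Fin I → ℝ := betaCoef I a c d - betaCoef I a c d' with hδdef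
  -- the target sets in noise space
  set T : Set (Fin I → ℝ) := {z | v + M *ᵥ (betaCoef I a c d' + z) ∈ S} with hTdef
  set T' : Set (Fin I → ℝ) := {z | v + M *ᵥ (betaCoef I a c d + z) ∈ S} with hT'def
  have hcont : Continuous (fun z : Fin I → ℝ => v + M *ᵥ (betaCoef I a c d' + z)) := by
    exact continuous_const.add
      (M.mulVecLin.continuous_of_finiteDimensional.comp (continuous_const.add continuous_id))
  have hcont' : Continuous (fun z : Fin I → ℝ => v + M *ᵥ (betaCoef I a c d + z)) := by
    exact continuous_const.add
      (M.mulVecLin.continuous_of_finiteDimensional.comp (continuous_const.add continuous_id))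
  have hT : MeasurableSet T := hcont.measurable hS
  have hT' : MeasurableSet T' := hcont'.measurable hS
  -- rewrite both sides via the law of γ
  have hL : P {w | v + M *ᵥ (betaCoef I a c d + γ w) ∈ S} = lapMeasure I σ 0 T' := by
    have : {w | v + M *ᵥ (betaCoef I a c d + γ w) ∈ S} = γ ⁻¹' T' := rfl
    rw [this, ← hγlaw, Measure.map_apply hγmeas hT']
  have hR : P {w | v + M *ᵥ (betaCoef I a c d' + γ w) ∈ S} = lapMeasure I σ 0 T := by
    have : {w | v + M *ᵥ (betaCoef I a c d' + γ w) ∈ S} = γ ⁻¹' T := rfl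
    rw [this, ← hγlaw, Measure.map_apply hγmeas hT]
  rw [hL, hR]
  -- T' is the shift of T by δ
  have hshift : T' = (fun z => z + δ) ⁻¹' T := by
    ext z
    simp only [hT'def, hTdef, Set.mem_setOf_eq, Set.mem_preimage]
    have : betaCoef I a c d + z = betaCoef I a c d' + (z + δ) := by
      rw [hδdef]; ext i; simp [Pi.add_apply, Pi.sub_apply]; ring
    rw [this]
  rw [hshift]
  -- positivity facts
  have hI1 : (1:ℝ) ≤ (I:ℝ) - 1 := by
    have : (2:ℝ) ≤ (I:ℝ) := by exact_mod_cast hI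
    linarith
  have hIpos : (0:ℝ) < (I:ℝ) := by positivity
  have hdenom : ∀ i : Fin I, 0 < a * c i * ((I:ℝ) - 1) + 1 := by
    intro i
    have h1 : 0 < a * c i := mul_pos ha (hc i)
    nlinarith
  have hcoef_pos : ∀ i : Fin I, 0 < a * c i * (I:ℝ) / (a * c i * ((I:ℝ) - 1) + 1) := by
    intro i
    apply div_pos _ (hdenom i)
    have := mul_pos (mul_pos ha (hc i)) hIpos
    linarith [mul_pos (mul_pos ha (hc i)) hIpos]
  have hApos : 0 < A := lt_of_lt_of_le (hcoef_pos i₀) (hAub i₀)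
  have hσpos : 0 < σ := lt_of_lt_of_le (by positivity : 0 < A * μadj / ε) hσ
  -- bound the ℓ¹ norm of δ
  have hδsum : ∑ i, |δ i| ≤ σ * ε := by
    have hsum : ∑ i, |δ i| = |δ i₀| := by
      apply Finset.sum_eq_single_of_mem i₀ (Finset.mem_univ i₀)
      intro j _ hj
      have : δ j = 0 := by
        simp only [hδdef, Pi.sub_apply, betaCoef, hadj₁ j hj, sub_self]
      rw [this, abs_zero]
    have hδi0 : |δ i₀| ≤ A * μadj := by
      have hval : δ i₀ = a * c i₀ * (I:ℝ) / (a * c i₀ * ((I:ℝ) - 1) + 1) * (d i₀ - d' i₀) := by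
        simp only [hδdef, Pi.sub_apply, betaCoef]
        field_simp
      rw [hval, abs_mul, abs_of_pos (hcoef_pos i₀)]
      exact mul_le_mul (hAub i₀) hadj₂ (abs_nonneg _) (le_of_lt hApos)
    have hAμ : A * μadj ≤ σ * ε := by
      have := (div_le_iff₀ hε).mp hσ
      linarith
    linarith [hsum, hδi0, hAμ]
  exact lap_shift I hσpos δ hδsum T hT
end
end

section
/- Under Assumption A1, the expected iterates of Algorithm 2 converge to the stacked Nash equilibrium: lim_{k→∞} E[y(k)] = 1_I ⊗ b*, where 1_I ⊗ b* ∈ ℝ^{I²} stacks I copies of b*. -/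
open Matrix MeasureTheory ProbabilityTheory Filter Finset
open scoped Kronecker ENNReal Topology

noncomputable section

/-! ### Auxiliary lemmas -/

private lemma isHerm_of_symm' {n : Type*} {A : Matrix n n ℝ} (h : Aᵀ = A) : A.IsHermitian := by
  rw [Matrix.IsHermitian, conjTranspose_eq_transpose_of_trivial]; exact h

private lemma dp_self_pos' {n : Type*} [Fintype n] {v : n → ℝ} (h : v ≠ 0) : 0 < v ⬝ᵥ v := by
  rcases Function.ne_iff.1 h with ⟨j, hj⟩
  exact Finset.sum_pos' (fun i _ => mul_self_nonneg _)
    ⟨j, Finset.mem_univ j, mul_self_pos.mpr hj⟩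

private lemma qform_le_of_spectrum_le' {n : Type*} [Fintype n] [DecidableEq n]
    {A : Matrix n n ℝ} (hA : A.IsHermitian) {lam : ℝ}
    (h : ∀ μ ∈ spectrum ℝ A, μ ≤ lam) (v : n → ℝ) :
    v ⬝ᵥ (A *ᵥ v) ≤ lam * (v ⬝ᵥ v) := by
  set B : Matrix n n ℝ := lam • (1 : Matrix n n ℝ) - A with hBdef
  have hB : B.IsHermitian := by
    apply isHerm_of_symm'
    have hAt : Aᵀ = A := by
      rw [← conjTranspose_eq_transpose_of_trivial]; exact hA.eq
    rw [transpose_sub, transpose_smul, transpose_one, hAt]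
  have hBspec : ∀ μ ∈ spectrum ℝ B, 0 ≤ μ := by
    intro μ hμ
    have hBalg : B = (algebraMap ℝ (Matrix n n ℝ)) lam - A := by
      rw [Algebra.algebraMap_eq_smul_one]
    rw [hBalg, ← spectrum.singleton_sub_eq] at hμ
    rcases Set.mem_sub.1 hμ with ⟨x, hx, s, hs, rfl⟩
    rw [Set.mem_singleton_iff] at hx
    subst hx
    linarith [h s hs]
  have hpsd : B.PosSemidef :=
    hB.posSemidef_iff_eigenvalues_nonneg.mpr fun i =>
      hBspec _ (hB.eigenvalues_mem_spectrum_real i)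
  have h0 := hpsd.dotProduct_mulVec_nonneg v
  have hstar : star v = v := star_trivial v
  rw [hstar] at h0
  have hexp : v ⬝ᵥ (B *ᵥ v) = lam * (v ⬝ᵥ v) - v ⬝ᵥ (A *ᵥ v) := by
    rw [hBdef, sub_mulVec, dotProduct_sub, smul_mulVec, one_mulVec,
      dotProduct_smul]
    simp [smul_eq_mul]
  rw [hexp] at h0
  linarith

private lemma eig_qform' {n : Type*} [Fintype n] [DecidableEq n]
    {A : Matrix n n ℝ} (hA : A.IsHermitian)
    (h : ∀ v : n → ℝ, v ≠ 0 → |v ⬝ᵥ (A *ᵥ v)| < v ⬝ᵥ v) (i : n) :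
    |hA.eigenvalues i| < 1 := by
  set u : n → ℝ := ⇑(hA.eigenvectorBasis i) with hu
  have hnorm : ‖hA.eigenvectorBasis i‖ = 1 := hA.eigenvectorBasis.orthonormal.1 i
  have huu : u ⬝ᵥ u = 1 := by
    have h1 : ‖hA.eigenvectorBasis i‖ ^ 2 = 1 := by rw [hnorm]; norm_num
    rw [EuclideanSpace.norm_eq] at h1
    rw [Real.sq_sqrt (by positivity)] at h1
    simpa [dotProduct, ← sq, Real.norm_eq_abs, sq_abs] using h1
  have hune : u ≠ 0 := by
    intro h0
    rw [h0] at huu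
    simp [dotProduct] at huu
  have heig := hA.eigenvalues_eq i
  have heq : hA.eigenvalues i = u ⬝ᵥ (A *ᵥ u) := by
    simpa [star_trivial] using heig
  rw [heq]
  calc |u ⬝ᵥ (A *ᵥ u)| < u ⬝ᵥ u := h u hune
  _ = 1 := huu

private lemma tendsto_pow_mulVec' {n : Type*} [Fintype n] [DecidableEq n]
    {A : Matrix n n ℝ} (hA : A.IsHermitian)
    (h : ∀ i, |hA.eigenvalues i| < 1) (v : n → ℝ) (p : n) :
    Tendsto (fun k => (A ^ k *ᵥ v) p) atTop (𝓝 0) := by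
  set U : Matrix n n ℝ := (hA.eigenvectorUnitary : Matrix n n ℝ) with hU
  set w : n → ℝ := star U *ᵥ v with hw
  set μ : n → ℝ := hA.eigenvalues with hμ
  have key : ∀ k, A ^ k *ᵥ v = ∑ i, (w i * μ i ^ k) • ⇑(hA.eigenvectorBasis i) := by
    intro k
    induction k with
    | zero =>
      simp only [pow_zero, one_mulVec, mul_one]
      have hUU : U * star U = 1 := Matrix.mem_unitaryGroup_iff.mp hA.eigenvectorUnitary.2
      have hv : v = U *ᵥ w := by rw [hw, mulVec_mulVec, hUU, one_mulVec]
      rw [hv]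
      funext q
      rw [Matrix.mulVec, dotProduct, Finset.sum_apply]
      apply Finset.sum_congr rfl
      intro i _
      simp only [Pi.smul_apply, smul_eq_mul]
      exact mul_comm _ _
    | succ k ih =>
      rw [pow_succ', ← Matrix.mulVec_mulVec, ih, ← Matrix.mulVecLin_apply, map_sum]
      apply Finset.sum_congr rfl
      intro i _
      rw [LinearMap.map_smul, Matrix.mulVecLin_apply, hA.mulVec_eigenvectorBasis,
        smul_smul]
      congr 1
      rw [pow_succ]
      ring
  have hpt : ∀ k, (A ^ k *ᵥ v) p = ∑ i, (w i * hA.eigenvectorBasis i p) * μ i ^ k := by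
    intro k
    rw [key k, Finset.sum_apply]
    apply Finset.sum_congr rfl
    intro i _
    simp only [Pi.smul_apply, smul_eq_mul]
    show (w i * μ i ^ k) * hA.eigenvectorBasis i p = w i * hA.eigenvectorBasis i p * μ i ^ k
    ring
  simp only [hpt]
  have hlim : Tendsto (fun k => ∑ i, (w i * hA.eigenvectorBasis i p) * μ i ^ k) atTop
      (𝓝 (∑ i : n, 0)) := by
    apply tendsto_finset_sum
    intro i _
    simpa using (tendsto_pow_atTop_nhds_zero_of_abs_lt_one (h i)).const_mul
      (w i * hA.eigenvectorBasis i p)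
  simpa using hlim

private lemma lap_mulVec' (I : ℕ) (ω : ℝ) (W : Matrix (Fin I) (Fin I) ℝ)
    (u : Fin I → ℝ) (i : Fin I) :
    (lap I ω W *ᵥ u) i = ∑ j, ω * (W i j * (u i - u j)) := by
  simp only [lap, Matrix.mulVec, dotProduct, Matrix.smul_apply, Matrix.sub_apply,
    Matrix.diagonal_apply, smul_eq_mul]
  rw [Finset.sum_congr rfl (fun j _ => show ω * ((if i = j then ∑ k, W i k else 0) - W i j) * u j
    = (if i = j then (∑ k, W i k) * (ω * u j) else 0) - ω * (W i j * u j) from by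
      split_ifs <;> ring)]
  rw [Finset.sum_sub_distrib, Finset.sum_ite_eq, if_pos (Finset.mem_univ i)]
  rw [Finset.sum_congr rfl (fun j _ => show ω * (W i j * (u i - u j))
    = ω * (W i j * u i) - ω * (W i j * u j) from by ring)]
  rw [Finset.sum_sub_distrib]
  congr 1
  rw [Finset.sum_mul]
  exact Finset.sum_congr rfl (fun j _ => by ring)

private lemma lap_qform' (I : ℕ) (ω : ℝ) (W : Matrix (Fin I) (Fin I) ℝ)
    (hWsym : W.IsSymm) (u : Fin I → ℝ) :
    u ⬝ᵥ (lap I ω W *ᵥ u) = ∑ i, ∑ j, (ω/2) * (W i j * (u i - u j)^2) := by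
  have key : ∑ i, ∑ j, W i j * u j ^ 2 = ∑ i, ∑ j, W i j * u i ^ 2 := by
    rw [Finset.sum_comm]
    apply Finset.sum_congr rfl; intro i _
    apply Finset.sum_congr rfl; intro j _
    rw [hWsym.apply i j]
  have lhs_eq : u ⬝ᵥ (lap I ω W *ᵥ u)
      = ∑ i, ∑ j, (ω * (W i j * u i ^ 2) - ω * (W i j * (u i * u j))) := by
    rw [dotProduct]
    apply Finset.sum_congr rfl; intro i _
    rw [lap_mulVec', Finset.mul_sum]
    apply Finset.sum_congr rfl; intro j _
    ring
  have rhs_eq : ∑ i, ∑ j, (ω/2) * (W i j * (u i - u j)^2)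
      = ∑ i, ∑ j, ((ω * (W i j * u i ^ 2) - ω * (W i j * (u i * u j)))
          + ((ω/2) * (W i j * u j ^ 2) - (ω/2) * (W i j * u i ^ 2))) := by
    apply Finset.sum_congr rfl; intro i _
    apply Finset.sum_congr rfl; intro j _
    ring
  rw [lhs_eq, rhs_eq]
  simp only [Finset.sum_add_distrib, Finset.sum_sub_distrib]
  have h2 : ∑ i, ∑ j, (ω/2) * (W i j * u j ^ 2) = ∑ i, ∑ j, (ω/2) * (W i j * u i ^ 2) := by
    calc ∑ i, ∑ j, (ω/2) * (W i j * u j ^ 2) = (ω/2) * ∑ i, ∑ j, W i j * u j ^ 2 := by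
          rw [Finset.mul_sum]
          exact Finset.sum_congr rfl (fun i _ => by rw [Finset.mul_sum])
      _ = (ω/2) * ∑ i, ∑ j, W i j * u i ^ 2 := by rw [key]
      _ = ∑ i, ∑ j, (ω/2) * (W i j * u i ^ 2) := by
          rw [Finset.mul_sum]
          exact Finset.sum_congr rfl (fun i _ => by rw [Finset.mul_sum])
  rw [h2]
  ring

private lemma kron_mulVec' (I : ℕ) (L : Matrix (Fin I) (Fin I) ℝ) (v : Fin I × Fin I → ℝ)
    (p : Fin I × Fin I) :
    ((L ⊗ₖ (1 : Matrix (Fin I) (Fin I) ℝ)) *ᵥ v) p = ∑ q1, L p.1 q1 * v (q1, p.2) := by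
  rw [Matrix.mulVec, dotProduct, Fintype.sum_prod_type]
  apply Finset.sum_congr rfl; intro q1 _
  rw [Finset.sum_congr rfl (fun q2 _ =>
    show (L ⊗ₖ (1 : Matrix (Fin I) (Fin I) ℝ)) p (q1, q2) * v (q1, q2)
      = if p.2 = q2 then L p.1 q1 * v (q1, q2) else 0 from by
        simp only [Matrix.kroneckerMap_apply, Matrix.one_apply]
        split_ifs <;> ring)]
  rw [Finset.sum_ite_eq, if_pos (Finset.mem_univ _)]

private lemma kron_qform' (I : ℕ) (L : Matrix (Fin I) (Fin I) ℝ) (v : Fin I × Fin I → ℝ) :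
    v ⬝ᵥ ((L ⊗ₖ (1 : Matrix (Fin I) (Fin I) ℝ)) *ᵥ v)
      = ∑ j : Fin I, (fun i => v (i,j)) ⬝ᵥ (L *ᵥ (fun i => v (i,j))) := by
  rw [dotProduct, Fintype.sum_prod_type]
  rw [Finset.sum_comm]
  apply Finset.sum_congr rfl; intro j _
  rw [dotProduct]
  apply Finset.sum_congr rfl; intro i _
  rw [kron_mulVec']
  rfl

private lemma blockF_transpose_mulVec' (I : ℕ) (f : Fin I → Fin I → ℝ)
    (v : Fin I × Fin I → ℝ) (i : Fin I) :
    ((blockF I f)ᵀ *ᵥ v) i = f i ⬝ᵥ (fun j => v (i,j)) := by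
  rw [Matrix.mulVec, dotProduct, Fintype.sum_prod_type]
  rw [Finset.sum_congr rfl (fun q1 _ => Finset.sum_congr rfl (fun q2 _ =>
    show (blockF I f)ᵀ i (q1, q2) * v (q1, q2)
      = if q1 = i then f q1 q2 * v (q1, q2) else 0 from by
        simp only [Matrix.transpose_apply, blockF, Matrix.of_apply]
        split_ifs <;> ring))]
  rw [Finset.sum_congr rfl (fun q1 _ => show (∑ q2, if q1 = i then f q1 q2 * v (q1, q2) else 0)
      = if q1 = i then ∑ q2, f q1 q2 * v (q1, q2) else 0 from by split_ifs <;> simp)]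
  rw [Finset.sum_ite_eq' Finset.univ i, if_pos (Finset.mem_univ _)]
  rfl

private lemma blockF_qform' (I : ℕ) (f : Fin I → Fin I → ℝ) (v : Fin I × Fin I → ℝ) :
    v ⬝ᵥ ((blockF I f * (blockF I f)ᵀ) *ᵥ v)
      = ∑ i, (f i ⬝ᵥ (fun j => v (i,j)))^2 := by
  rw [← Matrix.mulVec_mulVec, Matrix.dotProduct_mulVec, ← Matrix.mulVec_transpose]
  rw [dotProduct]
  apply Finset.sum_congr rfl; intro i _
  rw [blockF_transpose_mulVec']
  ring

private lemma dp_split_col (I : ℕ) (v : Fin I × Fin I → ℝ) :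
    v ⬝ᵥ v = ∑ j : Fin I, (fun i => v (i,j)) ⬝ᵥ (fun i => v (i,j)) := by
  rw [dotProduct, Fintype.sum_prod_type, Finset.sum_comm]
  rfl

private lemma dp_split_row (I : ℕ) (v : Fin I × Fin I → ℝ) :
    v ⬝ᵥ v = ∑ i : Fin I, (fun j => v (i,j)) ⬝ᵥ (fun j => v (i,j)) := by
  rw [dotProduct, Fintype.sum_prod_type]
  rfl

private lemma fvec_span' (I : ℕ) (hI : 2 ≤ I) (a : ℝ) (ha : 0 < a)
    (c : Fin I → ℝ) (hc : ∀ i, 0 < c i) (t : Fin I → ℝ)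
    (h : ∀ i, fvec I a c i ⬝ᵥ t = 0) : t = 0 := by
  set n : ℝ := (I : ℝ) - 1 with hn
  have hn1 : 1 ≤ n := by
    have : (2 : ℝ) ≤ (I : ℝ) := by exact_mod_cast hI
    simp [hn]; linarith
  have hn0 : 0 < n := by linarith
  set S : ℝ := ∑ j, t j with hS
  set g : Fin I → ℝ := fun i => a * c i with hg
  have hgpos : ∀ i, 0 < g i := fun i => mul_pos ha (hc i)
  set m : Fin I → ℝ := fun i => (2 * g i * n - (n - 1)) / (2 * n * (g i * n + 1)) with hm
  have hmu : ∀ i j, muCoef I a c i j = if j = i then 0 else m i := by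
    intro i j
    rw [muCoef, hm]
    split_ifs with hji
    · rfl
    · simp only [hg, hn]
      ring
  have hdp : ∀ i, fvec I a c i ⬝ᵥ t = t i - m i * (S - t i) := by
    intro i
    rw [dotProduct]
    rw [Finset.sum_congr rfl (fun j _ => show fvec I a c i j * t j
      = (if j = i then t j else 0) - (if j = i then 0 else m i * t j) from by
        rw [fvec, hmu]; split_ifs <;> ring)]
    rw [Finset.sum_sub_distrib, Finset.sum_ite_eq' Finset.univ i, if_pos (Finset.mem_univ _)]
    congr 1
    have hsplit : ∀ j : Fin I, (if j = i then 0 else m i * t j)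
        = m i * t j - (if j = i then m i * t j else 0) := by
      intro j; split_ifs <;> ring
    rw [Finset.sum_congr rfl (fun j _ => hsplit j), Finset.sum_sub_distrib,
      Finset.sum_ite_eq' Finset.univ i, if_pos (Finset.mem_univ _), ← Finset.mul_sum]
    ring
  set A : Fin I → ℝ := fun i => 2 * g i * n - (n - 1) with hA
  set C : Fin I → ℝ := fun i => (n + 1) * (2 * g i * n + 1) with hC
  have hCpos : ∀ i, 0 < C i := by
    intro i
    have h1 := hgpos i
    have h2 : 0 < 2 * g i * n + 1 := by nlinarith
    exact mul_pos (by linarith) h2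
  have hBpos : ∀ i, 0 < 2 * n * (g i * n + 1) := by
    intro i; have := hgpos i; exact mul_pos (by linarith) (by nlinarith)
  have hti : ∀ i, t i * C i = A i * S := by
    intro i
    have h0 := (hdp i).symm.trans (h i)
    rw [hm] at h0
    have hB := (hBpos i).ne'
    have hmi : (2 * g i * n - (n - 1)) / (2 * n * (g i * n + 1)) * (2 * n * (g i * n + 1))
        = 2 * g i * n - (n - 1) := div_mul_cancel₀ _ hB
    rw [hA, hC]
    linear_combination (2 * n * (g i * n + 1)) * h0 + (S - t i) * hmi
  have htival : ∀ i, t i = A i / C i * S := by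
    intro i
    have hC' : C i ≠ 0 := (hCpos i).ne'
    field_simp
    linear_combination hti i
  have hfrac : ∀ i, A i / C i < 1 / (n + 1) := by
    intro i
    rw [div_lt_div_iff₀ (hCpos i) (by linarith : (0:ℝ) < n + 1)]
    have h1 := hgpos i
    have hAi : A i = 2 * g i * n - (n - 1) := rfl
    have hCi : C i = (n + 1) * (2 * g i * n + 1) := rfl
    rw [hAi, hCi]
    nlinarith
  have hnI : n + 1 = (I : ℝ) := by rw [hn]; ring
  have hsumlt : ∑ i, A i / C i < 1 := by
    calc ∑ i, A i / C i < ∑ _i : Fin I, 1 / (n + 1) :=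
          Finset.sum_lt_sum_of_nonempty (by
            have hne : Nonempty (Fin I) :=
              Fin.pos_iff_nonempty.mp (lt_of_lt_of_le (by norm_num) hI)
            exact Finset.univ_nonempty) (fun i _ => hfrac i)
      _ = (I : ℝ) * (1 / (n + 1)) := by rw [Finset.sum_const]; simp [mul_comm]
      _ = 1 := by rw [hnI]; field_simp
  have hS0 : S = 0 := by
    by_contra hS0
    have hsum : S = (∑ i, A i / C i) * S := by
      conv_lhs => rw [hS]
      rw [Finset.sum_mul]
      exact Finset.sum_congr rfl (fun i _ => htival i)
    have h1 : (∑ i, A i / C i) = 1 := by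
      apply mul_right_cancel₀ hS0
      rw [one_mul]
      linarith [hsum]
    linarith
  funext i
  have hfin := htival i
  rw [hS0] at hfin
  simpa using hfin


private lemma qformQ_lt {I : ℕ} (hI : 2 ≤ I) {a : ℝ} (ha : 0 < a)
    {c : Fin I → ℝ} (hc : ∀ i, 0 < c i)
    {W : Matrix (Fin I) (Fin I) ℝ} (hWsym : W.IsSymm)
    (hW0 : ∀ i j, 0 ≤ W i j) {ω : ℝ}
    (hω0 : 0 ≤ ω)
    (hconn : ∀ v : Fin I → ℝ, (lap I ω W) *ᵥ v = 0 → ∃ t : ℝ, v = fun _ => t)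
    {α : ℝ} (hα0 : 0 < α)
    {lamBar fBar : ℝ}
    (hlamBarUB : ∀ lam ∈ spectrum ℝ (lap I ω W), lam ≤ lamBar)
    (hfsq : ∀ i, ∑ j, fvec I a c i j ^ 2 ≤ fBar ^ 2)
    (hlam2 : lamBar + α * fBar ^ 2 < 2)
    (v : Fin I × Fin I → ℝ) (hv : v ≠ 0) :
    |v ⬝ᵥ (Qmat I a ω α c W *ᵥ v)| < v ⬝ᵥ v := by
  classical
  have hvv : 0 < v ⬝ᵥ v := dp_self_pos' hv
  have hLsymm : (lap I ω W)ᵀ = lap I ω W := by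
    rw [lap, transpose_smul, transpose_sub, diagonal_transpose, hWsym.eq]
  have hLher : (lap I ω W).IsHermitian := isHerm_of_symm' hLsymm
  set q1 : ℝ := v ⬝ᵥ ((lap I ω W ⊗ₖ (1 : Matrix (Fin I) (Fin I) ℝ)) *ᵥ v) with hq1
  set q2 : ℝ := v ⬝ᵥ ((blockF I (fvec I a c) * (blockF I (fvec I a c))ᵀ) *ᵥ v) with hq2
  have hqQ : v ⬝ᵥ (Qmat I a ω α c W *ᵥ v) = v ⬝ᵥ v - q1 - α * q2 := by
    rw [Qmat, sub_mulVec, sub_mulVec, one_mulVec, dotProduct_sub, dotProduct_sub,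
      smul_mulVec, dotProduct_smul]
    rfl
  have hq1col : q1 = ∑ j : Fin I, (fun i => v (i,j)) ⬝ᵥ (lap I ω W *ᵥ (fun i => v (i,j))) :=
    kron_qform' I (lap I ω W) v
  have hq2row : q2 = ∑ i, (fvec I a c i ⬝ᵥ (fun j => v (i,j)))^2 := blockF_qform' I _ v
  have hcolnonneg : ∀ j : Fin I,
      (0:ℝ) ≤ (fun i => v (i,j)) ⬝ᵥ (lap I ω W *ᵥ (fun i => v (i,j))) := by
    intro j
    rw [lap_qform' I ω W hWsym]
    apply Finset.sum_nonneg; intro i _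
    apply Finset.sum_nonneg; intro i' _
    exact mul_nonneg (by linarith) (mul_nonneg (hW0 i i') (sq_nonneg _))
  have hq1nonneg : 0 ≤ q1 := by
    rw [hq1col]
    exact Finset.sum_nonneg fun j _ => hcolnonneg j
  have hq2nonneg : 0 ≤ q2 := by
    rw [hq2row]
    exact Finset.sum_nonneg fun i _ => sq_nonneg _
  have hq1le : q1 ≤ lamBar * (v ⬝ᵥ v) := by
    rw [hq1col, dp_split_col I v, Finset.mul_sum]
    exact Finset.sum_le_sum fun j _ => qform_le_of_spectrum_le' hLher hlamBarUB _
  have hq2le : q2 ≤ fBar ^ 2 * (v ⬝ᵥ v) := by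
    rw [hq2row, dp_split_row I v, Finset.mul_sum]
    apply Finset.sum_le_sum
    intro i _
    calc (fvec I a c i ⬝ᵥ (fun j => v (i,j)))^2
        ≤ (∑ j, fvec I a c i j ^ 2) * (∑ j, v (i,j) ^ 2) := by
          simpa [dotProduct] using
            Finset.sum_mul_sq_le_sq_mul_sq Finset.univ (fvec I a c i) (fun j => v (i,j))
      _ ≤ fBar ^ 2 * (∑ j, v (i,j) ^ 2) := by
          apply mul_le_mul_of_nonneg_right (hfsq i)
          positivity
      _ = fBar ^ 2 * ((fun j => v (i,j)) ⬝ᵥ (fun j => v (i,j))) := by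
          congr 1
          rw [dotProduct]
          exact Finset.sum_congr rfl fun j _ => by ring
  have hpos : 0 < q1 + α * q2 := by
    rcases lt_or_eq_of_le (add_nonneg hq1nonneg (mul_nonneg hα0.le hq2nonneg)) with h | h
    · exact h
    exfalso
    have hq10 : q1 = 0 := by linarith [mul_nonneg hα0.le hq2nonneg]
    have hq20 : q2 = 0 := by
      have hz : α * q2 = 0 := by linarith
      rcases mul_eq_zero.1 hz with h' | h'
      · exact absurd h' hα0.ne'
      · exact h'
    have hcolker : ∀ j : Fin I, lap I ω W *ᵥ (fun i => v (i,j)) = 0 := by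
      intro j
      rw [hq1col] at hq10
      have hcol0 : (fun i => v (i,j)) ⬝ᵥ (lap I ω W *ᵥ (fun i => v (i,j))) = 0 :=
        (Finset.sum_eq_zero_iff_of_nonneg (fun j' _ => hcolnonneg j')).1 hq10 j
          (Finset.mem_univ j)
      rw [lap_qform' I ω W hWsym] at hcol0
      have hterm : ∀ i i', (ω/2) * (W i i' * ((v (i,j)) - (v (i',j)))^2) = 0 := by
        intro i i'
        have hle : ∀ i ∈ Finset.univ, (0:ℝ) ≤
            ∑ i', (ω/2) * (W i i' * ((v (i,j)) - (v (i',j)))^2) := by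
          intro i _
          apply Finset.sum_nonneg; intro i' _
          exact mul_nonneg (by linarith) (mul_nonneg (hW0 i i') (sq_nonneg _))
        have hrow0 := (Finset.sum_eq_zero_iff_of_nonneg hle).1 hcol0 i (Finset.mem_univ i)
        have hle2 : ∀ i' ∈ Finset.univ, (0:ℝ) ≤
            (ω/2) * (W i i' * ((v (i,j)) - (v (i',j)))^2) := by
          intro i' _
          exact mul_nonneg (by linarith) (mul_nonneg (hW0 i i') (sq_nonneg _))
        exact (Finset.sum_eq_zero_iff_of_nonneg hle2).1 hrow0 i' (Finset.mem_univ i')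
      funext i
      rw [lap_mulVec']
      rw [show (0 : Fin I → ℝ) i = 0 from rfl]
      apply Finset.sum_eq_zero
      intro i' _
      have h0 := hterm i i'
      rcases mul_eq_zero.1 h0 with h' | h'
      · rw [show ω * (W i i' * (v (i,j) - v (i',j)))
            = 2 * ((ω/2) * (W i i' * (v (i,j) - v (i',j)))) from by ring]
        rw [show ω / 2 = 0 from h']
        ring
      · rcases mul_eq_zero.1 h' with h'' | h''
        · rw [h'']; ring
        · rw [show v (i,j) - v (i',j) = 0 from sq_eq_zero_iff.1 h'']
          ring
    have hcolconst : ∀ j : Fin I, ∃ t : ℝ, (fun i => v (i,j)) = fun _ => t :=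
      fun j => hconn _ (hcolker j)
    choose tt htt using hcolconst
    have hft : ∀ i, fvec I a c i ⬝ᵥ tt = 0 := by
      intro i
      rw [hq2row] at hq20
      have h0 := (Finset.sum_eq_zero_iff_of_nonneg
        (fun i' _ => sq_nonneg (fvec I a c i' ⬝ᵥ (fun j => v (i',j))))).1 hq20 i
        (Finset.mem_univ i)
      have h1 := sq_eq_zero_iff.1 h0
      have hrowi : (fun j => v (i,j)) = tt := by
        funext j
        simpa using congrFun (htt j) i
      rw [hrowi] at h1
      exact h1
    have htt0 : tt = 0 := fvec_span' I hI a ha c hc tt hft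
    apply hv
    funext p
    have h2 := congrFun (htt p.2) p.1
    rw [htt0] at h2
    simpa using h2
  have hub : q1 + α * q2 < 2 * (v ⬝ᵥ v) := by
    nlinarith [mul_le_mul_of_nonneg_left hq2le hα0.le,
      mul_lt_mul_of_pos_right hlam2 hvv]
  rw [hqQ, abs_lt]
  constructor
  · linarith
  · linarith

/-- under Assumption A1, the expected iterates of Algorithm 2 converge to
the stacked Nash equilibrium: `lim_{k→∞} E[y(k)] = 1_I ⊗ b*`. -/
theorem stmt_1
    (I : ℕ) (hI : 2 ≤ I) (a : ℝ) (ha : 0 < a)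
    (c : Fin I → ℝ) (hc : ∀ i, 0 < c i)
    (W : Matrix (Fin I) (Fin I) ℝ) (hWsym : W.IsSymm) (hWdiag : ∀ i, W i i = 0)
    (hW01 : ∀ i j, W i j = 0 ∨ W i j = 1)
    (ω : ℝ) (hω0 : 0 ≤ ω) (hω1 : ∀ i, ω ≤ 1 / (1 + ∑ j, W i j))
    (hconn : ∀ v : Fin I → ℝ, (lap I ω W) *ᵥ v = 0 → ∃ t : ℝ, v = fun _ => t)
    (lamBar lamLow : ℝ) (hlamLow0 : 0 < lamLow)
    (hlamBarUB : ∀ lam ∈ spectrum ℝ (lap I ω W), lam ≤ lamBar)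
    (hlamBarMem : lamBar ∈ spectrum ℝ (lap I ω W))
    (hlamLowLB : ∀ lam ∈ spectrum ℝ (lap I ω W), lam ≠ 0 → lamLow ≤ lam)
    (hlamLowMem : lamLow ∈ spectrum ℝ (lap I ω W))
    (fBar fLow : ℝ)
    (hfBarUB : ∀ i, Real.sqrt (∑ j, fvec I a c i j ^ 2) ≤ fBar)
    (hfBarMem : ∃ i, Real.sqrt (∑ j, fvec I a c i j ^ 2) = fBar)
    (hfLowLB : ∀ i, fLow ≤ Real.sqrt (∑ j, fvec I a c i j ^ 2))
    (hfLowMem : ∃ i, Real.sqrt (∑ j, fvec I a c i j ^ 2) = fLow)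
    (α : ℝ) (hα0 : 0 < α) (hα1 : α < (2 - lamBar) / (3 * fBar ^ 2))
    (hα2 : fBar ≠ fLow → α < lamLow * fLow ^ 2 / (2 * (fBar ^ 4 - fLow ^ 4)))
    (d : Fin I → ℝ)
    (bstar : Fin I → ℝ) (hb : ∀ i, fvec I a c i ⬝ᵥ bstar = betaCoef I a c d i)
    (σ : ℝ) (hσ : 0 ≤ σ)
    {Ω : Type*} [MeasurableSpace Ω] (P : Measure Ω) [IsProbabilityMeasure P]
    (γ : ℕ → Ω → Fin I → ℝ) (hγmeas : ∀ k, Measurable (γ k))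
    (hγindep : iIndepFun
      (fun (q : ℕ × Fin I) w => γ q.1 w q.2) P)
    (hγint : ∀ k i, Integrable (fun w => γ k w i) P)
    (hγint2 : ∀ k i, Integrable (fun w => γ k w i ^ 2) P)
    (hγmean : ∀ k i, ∫ w, γ k w i ∂P = 0)
    (hγvar : ∀ k i, ∫ w, γ k w i ^ 2 ∂P = 2 * σ ^ 2)
    (y0 : Fin I × Fin I → ℝ) (y : ℕ → Ω → Fin I × Fin I → ℝ)
    (hy0 : ∀ w, y 0 w = y0)
    (hy : ∀ k w, y (k + 1) w
      = (Qmat I a ω α c W) *ᵥ y k w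
        + α • (blockF I (fvec I a c)) *ᵥ (betaCoef I a c d + γ k w))
    : Tendsto (fun k => fun p : Fin I × Fin I => ∫ w, y k w p ∂P) atTop
        (𝓝 (fun p : Fin I × Fin I => bstar p.2)) := by
  classical
  set F : Matrix (Fin I × Fin I) (Fin I) ℝ := blockF I (fvec I a c) with hFdef
  set L : Matrix (Fin I) (Fin I) ℝ := lap I ω W with hLdef
  set Q : Matrix (Fin I × Fin I) (Fin I × Fin I) ℝ := Qmat I a ω α c W with hQdef
  set β : Fin I → ℝ := betaCoef I a c d with hβdef
  -- Part A : integrability and mean recursion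
  have hint : ∀ k p, Integrable (fun w => y k w p) P := by
    intro k
    induction k with
    | zero =>
      intro p
      have : (fun w => y 0 w p) = fun _ => y0 p := funext fun w => by rw [hy0 w]
      rw [this]; exact integrable_const _
    | succ k ih =>
      intro p
      have hrw : (fun w => y (k+1) w p)
          = fun w => (∑ q, Q p q * y k w q) + α * (∑ j, F p j * (β j + γ k w j)) := by
        funext w
        rw [hy k w]
        rfl
      rw [hrw]
      exact (integrable_finset_sum _ fun q _ => (ih q).const_mul _).add
        ((integrable_finset_sum _ fun j _ => (integrable_const_add_iff.mpr (hγint k j)).const_mul _).const_mul α)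
  set m : ℕ → (Fin I × Fin I) → ℝ := fun k p => ∫ w, y k w p ∂P with hmdef
  have hmrec : ∀ k, m (k+1) = Q *ᵥ m k + α • (F *ᵥ β) := by
    intro k
    funext p
    have h1 : Integrable (fun w => ∑ q, Q p q * y k w q) P :=
      integrable_finset_sum _ fun q _ => (hint k q).const_mul _
    have h2 : Integrable (fun w => ∑ j, F p j * (β j + γ k w j)) P :=
      integrable_finset_sum _ fun j _ => (integrable_const_add_iff.mpr (hγint k j)).const_mul _
    have hstep : m (k+1) p = (∑ q, Q p q * m k q) + α * (∑ j, F p j * β j) := by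
      show (∫ w, y (k+1) w p ∂P) = _
      rw [show (fun w => y (k+1) w p)
          = fun w => (∑ q, Q p q * y k w q) + α * (∑ j, F p j * (β j + γ k w j)) from
        funext fun w => by rw [hy k w]; rfl]
      rw [integral_add h1 (h2.const_mul α), integral_const_mul]
      congr 1
      · rw [integral_finset_sum _ (fun q _ => (hint k q).const_mul _)]
        exact Finset.sum_congr rfl fun q _ => integral_const_mul _ _
      · congr 1
        rw [integral_finset_sum _ (fun j _ => (integrable_const_add_iff.mpr (hγint k j)).const_mul _)]
        apply Finset.sum_congr rfl
        intro j _
        rw [integral_const_mul, integral_add (integrable_const _) (hγint k j), hγmean k j,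
          integral_const]
        simp
    rw [hstep]
    rfl
  -- Part B : fixed point
  set ys : Fin I × Fin I → ℝ := fun p => bstar p.2 with hysdef
  have hFt : Fᵀ *ᵥ ys = β := by
    funext i
    rw [hFdef, blockF_transpose_mulVec']
    exact hb i
  have hLrow : (L ⊗ₖ (1 : Matrix (Fin I) (Fin I) ℝ)) *ᵥ ys = 0 := by
    funext p
    rw [kron_mulVec']
    have hconst : ∑ q1, L p.1 q1 * ys (q1, p.2) = (L *ᵥ (fun _ => bstar p.2)) p.1 := rfl
    rw [hconst, hLdef, lap_mulVec']
    simp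
  have hfix : Q *ᵥ ys + α • (F *ᵥ β) = ys := by
    have hM2 : (blockF I (fvec I a c) * (blockF I (fvec I a c))ᵀ) *ᵥ ys
        = F *ᵥ (Fᵀ *ᵥ ys) := by rw [Matrix.mulVec_mulVec]
    rw [hQdef, Qmat, sub_mulVec, sub_mulVec, one_mulVec, smul_mulVec, hM2, hFt]
    rw [show (lap I ω W ⊗ₖ (1:Matrix (Fin I) (Fin I) ℝ)) *ᵥ ys = 0 from hLrow]
    funext p
    simp only [Pi.add_apply, Pi.sub_apply, Pi.smul_apply, Pi.zero_apply]
    ring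
  -- Part C : closed form
  have hmk : ∀ k, m k = fun p => ys p + ((Q ^ k) *ᵥ (fun q => m 0 q - ys q)) p := by
    intro k
    induction k with
    | zero =>
      funext p
      simp [pow_zero, Matrix.one_mulVec]
    | succ k ih =>
      rw [hmrec k, ih]
      funext p
      have hQk : Q ^ (k+1) *ᵥ (fun q => m 0 q - ys q)
          = Q *ᵥ (Q ^ k *ᵥ (fun q => m 0 q - ys q)) := by
        rw [pow_succ', ← Matrix.mulVec_mulVec]
      rw [hQk]
      have hsplit : (Q *ᵥ fun q => ys q + (Q ^ k *ᵥ fun q' => m 0 q' - ys q') q)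
          = Q *ᵥ ys + Q *ᵥ (Q ^ k *ᵥ fun q' => m 0 q' - ys q') := by
        rw [← Matrix.mulVec_add]
        rfl
      calc (Q *ᵥ fun q => ys q + (Q ^ k *ᵥ fun q' => m 0 q' - ys q') q) p
            + (α • (F *ᵥ β)) p
          = (Q *ᵥ ys) p + (α • (F *ᵥ β)) p
              + (Q *ᵥ (Q ^ k *ᵥ fun q' => m 0 q' - ys q')) p := by
            rw [hsplit]
            simp only [Pi.add_apply]
            ring
        _ = ys p + (Q *ᵥ (Q ^ k *ᵥ fun q' => m 0 q' - ys q')) p := by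
            have := congrFun hfix p
            simp only [Pi.add_apply] at this
            rw [this]
  -- Part D : spectral analysis
  have hLsymm : Lᵀ = L := by
    rw [hLdef, lap, transpose_smul, transpose_sub, diagonal_transpose, hWsym.eq]
  have hLher : L.IsHermitian := isHerm_of_symm' hLsymm
  have hQher : Q.IsHermitian := by
    apply isHerm_of_symm'
    rw [hQdef, Qmat, transpose_sub, transpose_sub, transpose_one, transpose_smul,
      transpose_mul, transpose_transpose, ← Matrix.kroneckerMap_transpose,
      transpose_one]
    rw [show (lap I ω W)ᵀ = lap I ω W from hLsymm]
  have hW0 : ∀ i j, 0 ≤ W i j := by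
    intro i j
    rcases hW01 i j with h | h <;> rw [h] <;> norm_num
  have hfBar0 : 0 ≤ fBar := by
    rcases hfBarMem with ⟨i, hi⟩
    rw [← hi]; positivity
  have hfBarpos : 0 < fBar := by
    rcases eq_or_lt_of_le hfBar0 with h | h
    · exfalso
      rw [← h] at hα1
      norm_num at hα1
      linarith
    · exact h
  have hlam2 : lamBar + α * fBar ^ 2 < 2 := by
    have h3 : 0 < 3 * fBar ^ 2 := by positivity
    rw [lt_div_iff₀ h3] at hα1
    nlinarith
  have hfsq : ∀ i, ∑ j, fvec I a c i j ^ 2 ≤ fBar ^ 2 := by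
    intro i
    have h1 := hfBarUB i
    have h2 : (0:ℝ) ≤ ∑ j, fvec I a c i j ^ 2 := by positivity
    calc ∑ j, fvec I a c i j ^ 2 = Real.sqrt (∑ j, fvec I a c i j ^ 2) ^ 2 :=
          (Real.sq_sqrt h2).symm
      _ ≤ fBar ^ 2 := by
          apply pow_le_pow_left₀ (Real.sqrt_nonneg _) h1
  have hQform : ∀ v : Fin I × Fin I → ℝ, v ≠ 0 → |v ⬝ᵥ (Q *ᵥ v)| < v ⬝ᵥ v := by
    intro v hv
    exact qformQ_lt hI ha hc hWsym hW0 hω0 hconn hα0 hlamBarUB hfsq hlam2 v hv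
  -- eigenvalues of Q are in (-1, 1)
  have heig : ∀ i, |hQher.eigenvalues i| < 1 := eig_qform' hQher hQform
  -- conclude
  rw [tendsto_pi_nhds]
  intro p
  have hlim := tendsto_pow_mulVec' hQher heig (fun q => m 0 q - ys q) p
  have hfull : Tendsto (fun k => ys p + ((Q ^ k) *ᵥ (fun q => m 0 q - ys q)) p) atTop
      (𝓝 (ys p + 0)) := hlim.const_add _
  rw [add_zero] at hfull
  have hfin : Tendsto (fun k => m k p) atTop (𝓝 (ys p)) := by
    apply hfull.congr
    intro k
    rw [hmk k]
  exact hfin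
end
end

section
/- Suppose the communication graph is fully connected (N_l = {1,…,I}∖{l} for every l), α > 0 and 0 < ω ≤ 1/I. Consider the deterministic iteration z_l(k+1) = z_l(k) − ω·Σ_{j≠l}(z_l(k) − z_j(k)) − α·f_l·(f_lᵀ·z_l(k) − β̂_l), with z_l(k) ∈ ℝ^I for each l ∈ {1,…,I}. Fix an index i and an observation window of K+1 consecutive iterations with K ≥ I. If two parameter/initial-state configurations (β̂, (z_l(0))_{l=1,…,I}) and (β̂′, (z′_l(0))_{l=1,…,I}) satisfy β̂_j = β̂′_j for all j ≠ i and produce the same observed trajectory of prosumer i, i.e., z_i(k) = z′_i(k) for k = 0, 1, …, K, then β̂_i = β̂′_i. In particular, the private coefficient β_i (and hence the private demand d_i) of prosumer i is uniquely determined by an adversary who observes y_i(k) over at least I+1 consecutive iterations and knows β_j for all j ≠ i. -/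
open Matrix MeasureTheory ProbabilityTheory Filter Finset
open scoped Kronecker ENNReal Topology

noncomputable section

/-- identifiability / adversarial inference: with a fully connected
communication graph, `α > 0`, `0 < ω ≤ 1/I`, and an observation window of `K + 1 ≥ I + 1`
consecutive iterations of the deterministic iteration
`z_l(k+1) = z_l(k) - ω ∑_{j≠l} (z_l(k) - z_j(k)) - α f_l (f_lᵀ z_l(k) - β̂_l)`,
two configurations agreeing in `β̂_j` for all `j ≠ i` and producing the same observed
trajectory of prosumer `i` must have `β̂_i = β̂'_i`. -/
theorem stmt_3 (I : ℕ) (hI : 2 ≤ I) (a : ℝ) (ha : 0 < a)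
    (c : Fin I → ℝ) (hc : ∀ i, 0 < c i)
    (α ω : ℝ) (hα : 0 < α) (hω0 : 0 < ω) (hω1 : ω ≤ 1 / (I : ℝ))
    (K : ℕ) (hK : I ≤ K)
    (i : Fin I) (βh βh' : Fin I → ℝ)
    (z z' : ℕ → Fin I → Fin I → ℝ)
    (hz : ∀ k l, z (k + 1) l
      = z k l - ω • (∑ j ∈ Finset.univ.erase l, (z k l - z k j))
        - α • ((fvec I a c l ⬝ᵥ z k l - βh l) • fvec I a c l))
    (hz' : ∀ k l, z' (k + 1) l
      = z' k l - ω • (∑ j ∈ Finset.univ.erase l, (z' k l - z' k j))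
        - α • ((fvec I a c l ⬝ᵥ z' k l - βh' l) • fvec I a c l))
    (hβ : ∀ j, j ≠ i → βh j = βh' j)
    (hobs : ∀ k, k ≤ K → z k i = z' k i) :
    βh i = βh' i := by
  have hIr : (2:ℝ) ≤ (I:ℝ) := by exact_mod_cast hI
  have hI1 : (0:ℝ) < (I:ℝ) - 1 := by linarith
  have hI0 : (0:ℝ) < (I:ℝ) := by linarith
  set m : Fin I → ℝ := fun l =>
    (2*a*c l*((I:ℝ)-1) - ((I:ℝ)-2)) / (2*((I:ℝ)-1)*(a*c l*((I:ℝ)-1)+1)) with hmdef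
  have hfval : ∀ l j : Fin I, fvec I a c l j = if j = l then 1 else -(m l) := by
    intro l j
    simp only [fvec, muCoef, hmdef]
    by_cases h : j = l <;> simp [h]
  have hm1 : ∀ l, 0 < 1 + m l := by
    intro l
    have hacl : 0 < a * c l := mul_pos ha (hc l)
    have h3 : 0 < a*c l*((I:ℝ)-1) := mul_pos hacl hI1
    have hD : 0 < 2*((I:ℝ)-1)*(a*c l*((I:ℝ)-1)+1) :=
      mul_pos (mul_pos (two_pos (α := ℝ)) hI1) (by linarith)
    have h2 : 1 + m l = ((I:ℝ)*(2*a*c l*((I:ℝ)-1)+1)) / (2*((I:ℝ)-1)*(a*c l*((I:ℝ)-1)+1)) := by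
      rw [hmdef]
      field_simp
      ring
    rw [h2]
    apply div_pos _ hD
    have := mul_pos hI0 (by nlinarith : (0:ℝ) < 2*a*c l*((I:ℝ)-1)+1)
    linarith
  -- erase-sum helper
  have hsum : ∀ (g : Fin I → ℝ) (x : ℝ) (l : Fin I),
      ∑ j ∈ Finset.univ.erase l, (x - g j) = ((I:ℝ)-1)*x - (∑ j, g j) + g l := by
    intro g x l
    rw [Finset.sum_sub_distrib, Finset.sum_const, Finset.card_erase_of_mem (Finset.mem_univ l),
      Finset.card_univ, Fintype.card_fin, Finset.sum_erase_eq_sub (Finset.mem_univ l)]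
    rw [nsmul_eq_mul, Nat.cast_sub (by omega : 1 ≤ I), Nat.cast_one]
    ring
  set T : ℕ → Fin I → ℝ := fun k n => ∑ j, (z k j n - z' k j n) with hTdef
  set G : ℕ → Fin I → ℝ := fun k l => fvec I a c l ⬝ᵥ (z k l - z' k l) - (βh l - βh' l) with hGdef
  have hGi : ∀ k, k ≤ K → G k i = -(βh i - βh' i) := by
    intro k hk
    rw [hGdef]
    simp only
    rw [hobs k hk, sub_self, dotProduct_zero]
    ring
  -- componentwise recursion of the difference
  have hwc : ∀ k l n, z (k+1) l n - z' (k+1) l n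
      = (1 - ω*(I:ℝ)) * (z k l n - z' k l n) + ω * T k n - α * G k l * fvec I a c l n := by
    intro k l n
    have h1 := congrFun (hz k l) n
    have h2 := congrFun (hz' k l) n
    simp only [Pi.sub_apply, Pi.smul_apply, Finset.sum_apply, smul_eq_mul] at h1 h2
    rw [hsum (fun j => z k j n) (z k l n) l] at h1
    rw [hsum (fun j => z' k j n) (z' k l n) l] at h2
    have hds : fvec I a c l ⬝ᵥ (z k l - z' k l) = fvec I a c l ⬝ᵥ z k l - fvec I a c l ⬝ᵥ z' k l :=
      dotProduct_sub _ _ _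
    have hTs : T k n = (∑ j, z k j n) - (∑ j, z' k j n) := by
      rw [hTdef]
      simp only
      rw [Finset.sum_sub_distrib]
    linear_combination h1 - h2 - ω * hTs + (α * fvec I a c l n) * hds
  -- Fact A: ω·T k = -(α δ)·f i for k+1 ≤ K
  have hT1 : ∀ k, k + 1 ≤ K → ∀ n,
      T k n = (-(α*(βh i - βh' i))/ω) * fvec I a c i n := by
    intro k hk n
    have h := hwc k i n
    have e0 : z k i n - z' k i n = 0 := by rw [hobs k (by omega)]; ring
    have e1 : z (k+1) i n - z' (k+1) i n = 0 := by rw [hobs (k+1) hk]; ring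
    rw [e0, e1, hGi k (by omega)] at h
    have hω := hω0.ne'
    field_simp
    linear_combination -h
  -- Fact B: ∑_l G k l · f l = 0 for k+2 ≤ K
  have hB : ∀ k, k+2 ≤ K → ∀ n, ∑ l, G k l * fvec I a c l n = 0 := by
    intro k hk n
    have hs : T (k+1) n
        = ∑ l, ((1 - ω*(I:ℝ)) * (z k l n - z' k l n) + ω * T k n - α * G k l * fvec I a c l n) := by
      rw [hTdef]
      exact Finset.sum_congr rfl (fun l _ => hwc k l n)
    rw [Finset.sum_sub_distrib, Finset.sum_add_distrib, ← Finset.mul_sum, Finset.sum_const,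
      Finset.card_univ, Fintype.card_fin, nsmul_eq_mul] at hs
    have hTn : ∑ l, (z k l n - z' k l n) = T k n := by rw [hTdef]
    rw [hTn] at hs
    have hgf : ∑ l, α * G k l * fvec I a c l n = α * ∑ l, G k l * fvec I a c l n := by
      rw [Finset.mul_sum]
      exact Finset.sum_congr rfl (fun l _ => by ring)
    rw [hgf, hT1 k (by omega) n, hT1 (k+1) (by omega) n] at hs
    have hz0 : α * ∑ l, G k l * fvec I a c l n = 0 := by linear_combination hs
    rcases mul_eq_zero.mp hz0 with h | h
    · exact absurd h hα.ne'
    · exact h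
  -- Fact C: solving the linear system
  have hGC : ∀ k, k+2 ≤ K →
      (∀ l, G k l * (1 + m l) = ∑ l', G k l' * m l') ∧
      (∑ l', G k l' * m l') = -(βh i - βh' i) * (1 + m i) := by
    intro k hk
    have key : ∀ l, G k l * (1 + m l) = ∑ l', G k l' * m l' := by
      intro l
      have e := hB k hk l
      have e2 : ∀ l' : Fin I, G k l' * fvec I a c l' l
          = (if l' = l then G k l' * (1+m l') else 0) - G k l' * m l' := by
        intro l'
        rw [hfval l' l]
        by_cases h : l = l'
        · subst h
          rw [if_pos rfl, if_pos rfl]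
          ring
        · have h' : ¬ l' = l := fun hh => h hh.symm
          rw [if_neg h, if_neg h']
          ring
      rw [Finset.sum_congr rfl (fun l' _ => e2 l'), Finset.sum_sub_distrib,
        Finset.sum_ite_eq' Finset.univ l (fun l' => G k l' * (1+m l'))] at e
      simp only [Finset.mem_univ, if_true] at e
      linarith [e]
    refine ⟨key, ?_⟩
    have hki := key i
    rw [hGi k (by omega)] at hki
    linarith [hki]
  -- Fact D: the recursion for f l ⬝ᵥ w k l
  have hD : ∀ k, k+1 ≤ K → ∀ l, G (k+1) l
      = (1 - ω*(I:ℝ) - α * (∑ n, fvec I a c l n * fvec I a c l n)) * G k l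
        - ω*(I:ℝ)*(βh l - βh' l)
        - α*(βh i - βh' i)*(∑ n, fvec I a c l n * fvec I a c i n) := by
    intro k hk l
    have hdot : ∀ kk, fvec I a c l ⬝ᵥ (z kk l - z' kk l)
        = ∑ n, fvec I a c l n * (z kk l n - z' kk l n) := by
      intro kk
      simp [dotProduct]
    have hGk : ∀ kk, G kk l = (∑ n, fvec I a c l n * (z kk l n - z' kk l n)) - (βh l - βh' l) := by
      intro kk
      rw [hGdef]
      simp only
      rw [hdot kk]
    have step : ∑ n, fvec I a c l n * (z (k+1) l n - z' (k+1) l n)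
        = (1-ω*(I:ℝ)) * (∑ n, fvec I a c l n * (z k l n - z' k l n))
          + ω * ((-(α*(βh i - βh' i))/ω) * ∑ n, fvec I a c l n * fvec I a c i n)
          - α * G k l * (∑ n, fvec I a c l n * fvec I a c l n) := by
      have e1 : ∀ n : Fin I, fvec I a c l n * (z (k+1) l n - z' (k+1) l n)
          = (1-ω*(I:ℝ))*(fvec I a c l n * (z k l n - z' k l n))
            + ω * ((-(α*(βh i - βh' i))/ω) * (fvec I a c l n * fvec I a c i n))
            - α * G k l * (fvec I a c l n * fvec I a c l n) := by
        intro n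
        rw [hwc k l n, hT1 k hk n]
        ring
      rw [Finset.sum_congr rfl (fun n _ => e1 n), Finset.sum_sub_distrib, Finset.sum_add_distrib,
        ← Finset.mul_sum, ← Finset.mul_sum, ← Finset.mul_sum, ← Finset.mul_sum]
    have hcan : ω * ((-(α*(βh i - βh' i))/ω) * ∑ n, fvec I a c l n * fvec I a c i n)
        = -(α*(βh i - βh' i)) * ∑ n, fvec I a c l n * fvec I a c i n := by
      field_simp
    rw [hGk (k+1), hGk k, step, hcan]
    have hGk2 := hGk k
    linear_combination (- α * (∑ n, fvec I a c l n * fvec I a c l n)) * hGk2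
  by_cases h3 : 3 ≤ K
  · -- general case: K ≥ 3
    have hC0 := hGC 0 (by omega)
    have hC1 := hGC 1 (by omega)
    have hG10 : ∀ l, G 1 l = G 0 l := by
      intro l
      have e0 := hC0.1 l
      rw [hC0.2] at e0
      have e1 := hC1.1 l
      rw [hC1.2] at e1
      have hmm := hm1 l
      have hmul : G 1 l * (1+m l) = G 0 l * (1+m l) := by rw [e0, e1]
      exact mul_right_cancel₀ (by linarith) hmul
    have hq0 : ∀ l, (0:ℝ) ≤ ∑ n, fvec I a c l n * fvec I a c l n :=
      fun l => Finset.sum_nonneg (fun n _ => mul_self_nonneg _)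
    have hfii : fvec I a c i i = 1 := by rw [hfval]; simp
    have hqi : (1:ℝ) ≤ ∑ n, fvec I a c i n * fvec I a c i n := by
      calc (1:ℝ) = fvec I a c i i * fvec I a c i i := by rw [hfii]; norm_num
        _ ≤ ∑ n, fvec I a c i n * fvec I a c i n :=
          Finset.single_le_sum (f := fun n => fvec I a c i n * fvec I a c i n)
            (fun n _ => mul_self_nonneg _) (Finset.mem_univ i)
    have hstep : ∀ l, (ω*(I:ℝ) + α * (∑ n, fvec I a c l n * fvec I a c l n)) * G 0 l
        = -(ω*(I:ℝ)*(βh l - βh' l))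
          - α*(βh i - βh' i)*(∑ n, fvec I a c l n * fvec I a c i n) := by
      intro l
      have hd := hD 0 (by omega) l
      rw [hG10 l] at hd
      linear_combination hd
    have hdotB : ∑ l, G 0 l * (∑ n, fvec I a c l n * fvec I a c i n) = 0 := by
      have hb := hB 0 (by omega)
      calc ∑ l, G 0 l * (∑ n, fvec I a c l n * fvec I a c i n)
          = ∑ l, ∑ n, G 0 l * fvec I a c l n * fvec I a c i n := by
            refine Finset.sum_congr rfl (fun l _ => ?_)
            rw [Finset.mul_sum]
            exact Finset.sum_congr rfl (fun n _ => by ring)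
        _ = ∑ n, ∑ l, G 0 l * fvec I a c l n * fvec I a c i n := Finset.sum_comm
        _ = ∑ n : Fin I, (∑ l, G 0 l * fvec I a c l n) * fvec I a c i n := by
            refine Finset.sum_congr rfl (fun n _ => ?_)
            rw [Finset.sum_mul]
        _ = 0 := by
            refine Finset.sum_eq_zero (fun n _ => ?_)
            rw [hb n, zero_mul]
    have hsplit : ∑ l ∈ Finset.univ.erase i, G 0 l * (∑ n, fvec I a c l n * fvec I a c i n)
        = (βh i - βh' i) * (∑ n, fvec I a c i n * fvec I a c i n) := by
      have hadd := Finset.add_sum_erase Finset.univ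
        (fun l => G 0 l * (∑ n, fvec I a c l n * fvec I a c i n)) (Finset.mem_univ i)
      rw [hdotB, hGi 0 (by omega)] at hadd
      linarith [hadd]
    have hDen : ∀ l, 0 < ω*(I:ℝ) + α * (∑ n, fvec I a c l n * fvec I a c l n) := by
      intro l
      have := mul_pos hω0 hI0
      have := mul_nonneg hα.le (hq0 l)
      linarith
    have hterm : ∀ l ∈ Finset.univ.erase i,
        G 0 l * (∑ n, fvec I a c l n * fvec I a c i n)
        = -((βh i - βh' i) * (α * (∑ n, fvec I a c l n * fvec I a c i n)^2
            / (ω*(I:ℝ) + α * (∑ n, fvec I a c l n * fvec I a c l n)))) := by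
      intro l hl
      have hli : l ≠ i := Finset.ne_of_mem_erase hl
      have hs := hstep l
      rw [hβ l hli] at hs
      have hd : (ω*(I:ℝ) + α * (∑ n, fvec I a c l n * fvec I a c l n)) * G 0 l
          = -(α*(βh i - βh' i)*(∑ n, fvec I a c l n * fvec I a c i n)) := by
        linear_combination hs
      have hden := (hDen l).ne'
      rw [show G 0 l = -(α*(βh i - βh' i)*(∑ n, fvec I a c l n * fvec I a c i n))
          / (ω*(I:ℝ) + α * (∑ n, fvec I a c l n * fvec I a c l n)) from by
        rw [eq_div_iff hden]; linear_combination hd]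
      ring
    rw [Finset.sum_congr rfl hterm] at hsplit
    have hxnn : ∀ l ∈ Finset.univ.erase i,
        (0:ℝ) ≤ α * (∑ n, fvec I a c l n * fvec I a c i n)^2
          / (ω*(I:ℝ) + α * (∑ n, fvec I a c l n * fvec I a c l n)) := by
      intro l _
      exact div_nonneg (by positivity) (hDen l).le
    have hfac : (βh i - βh' i) * ((∑ n, fvec I a c i n * fvec I a c i n)
        + ∑ l ∈ Finset.univ.erase i, α * (∑ n, fvec I a c l n * fvec I a c i n)^2
            / (ω*(I:ℝ) + α * (∑ n, fvec I a c l n * fvec I a c l n))) = 0 := by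
      have hneg : ∑ l ∈ Finset.univ.erase i,
          -((βh i - βh' i) * (α * (∑ n, fvec I a c l n * fvec I a c i n)^2
            / (ω*(I:ℝ) + α * (∑ n, fvec I a c l n * fvec I a c l n))))
          = -((βh i - βh' i) * ∑ l ∈ Finset.univ.erase i,
              α * (∑ n, fvec I a c l n * fvec I a c i n)^2
            / (ω*(I:ℝ) + α * (∑ n, fvec I a c l n * fvec I a c l n))) := by
        rw [Finset.mul_sum, ← Finset.sum_neg_distrib]
      rw [hneg] at hsplit
      linear_combination -hsplit
    have hposfac : 0 < (∑ n, fvec I a c i n * fvec I a c i n)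
        + ∑ l ∈ Finset.univ.erase i, α * (∑ n, fvec I a c l n * fvec I a c i n)^2
            / (ω*(I:ℝ) + α * (∑ n, fvec I a c l n * fvec I a c l n)) := by
      have := Finset.sum_nonneg hxnn
      linarith
    rcases mul_eq_zero.mp hfac with h | h
    · linarith
    · exact absurd h hposfac.ne'
  · -- special case: I = 2, K = 2
    have hI2 : I = 2 := by omega
    have hIr2 : (I:ℝ) = 2 := by rw [hI2]; norm_num
    have hC := hGC 0 (by omega)
    have hGl : ∀ l, G 0 l * (1 + m l) = -(βh i - βh' i) * (1 + m i) := by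
      intro l
      rw [hC.1 l, hC.2]
    have hu := hC.2
    have hterm2 : ∀ l : Fin I, G 0 l * m l
        = (-(βh i - βh' i) * (1 + m i)) * (m l / (1 + m l)) := by
      intro l
      have hGv : G 0 l = (-(βh i - βh' i) * (1 + m i)) / (1 + m l) := by
        rw [eq_div_iff (hm1 l).ne']
        exact hGl l
      rw [hGv]
      ring
    rw [Finset.sum_congr rfl (fun l _ => hterm2 l), ← Finset.mul_sum] at hu
    by_contra hne
    have hδne : βh i - βh' i ≠ 0 := fun h => hne (by linarith)
    have hune : -(βh i - βh' i) * (1 + m i) ≠ 0 :=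
      mul_ne_zero (neg_ne_zero.mpr hδne) (hm1 i).ne'
    have hSig : ∑ l, m l / (1 + m l) = 1 := by
      have h2 : (-(βh i - βh' i) * (1 + m i)) * (∑ l, m l / (1 + m l))
          = (-(βh i - βh' i) * (1 + m i)) * 1 := by
        rw [mul_one]
        exact hu
      exact mul_left_cancel₀ hune h2
    have hml : ∀ l, m l < 1 := by
      intro l
      have hacl : 0 < a * c l := mul_pos ha (hc l)
      rw [hmdef]
      simp only
      rw [hIr2]
      rw [div_lt_one (by nlinarith)]
      nlinarith
    have hhalf : ∀ l : Fin I, m l / (1 + m l) < 1/2 := by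
      intro l
      rw [div_lt_iff₀ (hm1 l)]
      have := hml l
      linarith
    have : Nonempty (Fin I) := ⟨i⟩
    have hlt : ∑ l, m l / (1 + m l) < ∑ _l : Fin I, (1/2 : ℝ) :=
      Finset.sum_lt_sum_of_nonempty Finset.univ_nonempty (fun l _ => hhalf l)
    rw [Finset.sum_const, Finset.card_univ, Fintype.card_fin, nsmul_eq_mul, hIr2] at hlt
    rw [hSig] at hlt
    norm_num at hlt
end
end

section
/- Under Assumption A1, the spectral radius m of the symmetric matrix Q satisfies m < 1. -/
open Matrix MeasureTheory ProbabilityTheory Filter Finset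
open scoped Kronecker ENNReal Topology

noncomputable section

/-- Auxiliary: eigenvalue characterization of the real spectrum of a matrix. -/
lemma aux_mem_spectrum_iff_eigen {n : Type*} [Fintype n] [DecidableEq n]
    (M : Matrix n n ℝ) (μ : ℝ) :
    μ ∈ spectrum ℝ M ↔ ∃ v : n → ℝ, v ≠ 0 ∧ M *ᵥ v = μ • v := by
  have hmv : ∀ v : n → ℝ, (μ • (1 : Matrix n n ℝ) - M) *ᵥ v = μ • v - M *ᵥ v := by
    intro v
    rw [Matrix.sub_mulVec, Matrix.smul_mulVec, Matrix.one_mulVec]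
  rw [spectrum.mem_iff, Algebra.algebraMap_eq_smul_one, Matrix.isUnit_iff_isUnit_det,
    isUnit_iff_ne_zero, not_ne_iff, ← Matrix.exists_mulVec_eq_zero_iff]
  constructor
  · rintro ⟨v, hv, h⟩
    rw [hmv, sub_eq_zero] at h
    exact ⟨v, hv, h.symm⟩
  · rintro ⟨v, hv, h⟩
    exact ⟨v, hv, by rw [hmv, h, sub_self]⟩

/-- Auxiliary: a real symmetric matrix with nonnegative spectrum is PSD. -/
lemma aux_psd_of_spectrum_nonneg {n : Type*} [Fintype n] [DecidableEq n] {M : Matrix n n ℝ}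
    (hM : M.IsHermitian) (h : ∀ μ ∈ spectrum ℝ M, 0 ≤ μ) : M.PosSemidef :=
  hM.posSemidef_iff_eigenvalues_nonneg.mpr fun i => h _ (hM.eigenvalues_mem_spectrum_real i)

lemma aux_psd_quad {n : Type*} [Fintype n] {M : Matrix n n ℝ} (hM : M.PosSemidef) (x : n → ℝ) :
    0 ≤ x ⬝ᵥ (M *ᵥ x) := by
  have := hM.dotProduct_mulVec_nonneg x
  simpa using this

lemma aux_psd_quad_zero {n : Type*} [Fintype n] {M : Matrix n n ℝ} (hM : M.PosSemidef)
    (x : n → ℝ) (h : x ⬝ᵥ (M *ᵥ x) = 0) : M *ᵥ x = 0 := by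
  rw [← hM.dotProduct_mulVec_zero_iff x]
  simpa using h

/-- Auxiliary: quadratic form of a Kronecker product with the identity decomposes columnwise. -/
lemma aux_kron_quad {I : ℕ} (L : Matrix (Fin I) (Fin I) ℝ) (v : Fin I × Fin I → ℝ) :
    v ⬝ᵥ ((L ⊗ₖ (1 : Matrix (Fin I) (Fin I) ℝ)) *ᵥ v)
      = ∑ j, (fun i => v (i, j)) ⬝ᵥ (L *ᵥ fun i => v (i, j)) := by
  simp only [dotProduct, Matrix.mulVec, dotProduct, Matrix.kroneckerMap_apply,
    Matrix.one_apply, Fintype.sum_prod_type, mul_ite, mul_one, mul_zero,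
    Finset.sum_ite_eq', Finset.mem_univ, if_true, ite_mul, zero_mul]
  rw [Finset.sum_comm]
  congr 1; funext j; congr 1; funext i; congr 1
  rw [Finset.sum_comm]
  simp [Finset.sum_ite_eq]

lemma aux_Ft_apply {I : ℕ} (f : Fin I → Fin I → ℝ) (v : Fin I × Fin I → ℝ) (j : Fin I) :
    ((blockF I f)ᵀ *ᵥ v) j = ∑ l, f j l * v (j, l) := by
  simp only [blockF, Matrix.mulVec, dotProduct, Matrix.transpose_apply, Matrix.of_apply,
    Fintype.sum_prod_type, ite_mul, zero_mul]
  simp [Finset.sum_ite_eq]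

lemma aux_dot_self_cols {I : ℕ} (v : Fin I × Fin I → ℝ) :
    v ⬝ᵥ v = ∑ j, ∑ i, v (i, j) * v (i, j) := by
  simp only [dotProduct, Fintype.sum_prod_type]
  exact Finset.sum_comm

lemma aux_dot_self_rows {I : ℕ} (v : Fin I × Fin I → ℝ) :
    v ⬝ᵥ v = ∑ j, ∑ l, v (j, l) * v (j, l) := by
  simp only [dotProduct, Fintype.sum_prod_type]

/-- Auxiliary: the vectors `f_i` span, i.e. the matrix with rows `f_i` has trivial kernel. -/
lemma aux_fvec_ker {I : ℕ} (hI : 2 ≤ I) {a : ℝ} (ha : 0 < a) {c : Fin I → ℝ}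
    (hc : ∀ i, 0 < c i) (t : Fin I → ℝ) (h : ∀ i, ∑ l, fvec I a c i l * t l = 0) : t = 0 := by
  have hn1 : (1 : ℝ) ≤ (I : ℝ) - 1 := by
    have : (2 : ℝ) ≤ (I : ℝ) := by exact_mod_cast hI
    linarith
  set s : ℝ := ∑ l, t l with hs
  set g : Fin I → ℝ := fun i => 2 * a * c i * ((I : ℝ) - 1) + 1 with hg
  have hgpos : ∀ i, 0 < g i := by
    intro i
    have := mul_pos (mul_pos (mul_pos two_pos ha) (hc i)) (lt_of_lt_of_le one_pos hn1)
    simp only [hg]; nlinarith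
  have key : ∀ i, (I : ℝ) * g i * t i = (g i - ((I : ℝ) - 1)) * s := by
    intro i
    have h0 := h i
    have hexp : ∑ l, fvec I a c i l * t l
        = t i - ((2 * a * c i * ((I : ℝ) - 1) - ((I : ℝ) - 2)) /
            (2 * ((I : ℝ) - 1) * (a * c i * ((I : ℝ) - 1) + 1))) * (s - t i) := by
      have : ∀ l, fvec I a c i l * t l
          = (if l = i then t l else 0)
            - (((2 * a * c i * ((I : ℝ) - 1) - ((I : ℝ) - 2)) /
              (2 * ((I : ℝ) - 1) * (a * c i * ((I : ℝ) - 1) + 1))) * t l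
              - (if l = i then ((2 * a * c i * ((I : ℝ) - 1) - ((I : ℝ) - 2)) /
              (2 * ((I : ℝ) - 1) * (a * c i * ((I : ℝ) - 1) + 1))) * t l else 0)) := by
        intro l
        by_cases hl : l = i <;> simp [fvec, muCoef, hl] <;> ring
      rw [Finset.sum_congr rfl fun l _ => this l]
      rw [Finset.sum_sub_distrib, Finset.sum_sub_distrib, Finset.sum_ite_eq', Finset.sum_ite_eq',
        ← Finset.mul_sum]
      simp [← hs]
      ring
    rw [hexp] at h0
    have hd : (2 * ((I : ℝ) - 1) * (a * c i * ((I : ℝ) - 1) + 1)) ≠ 0 := by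
      have : 0 < a * c i * ((I : ℝ) - 1) + 1 := by nlinarith [mul_pos ha (hc i)]
      positivity
    field_simp at h0
    simp only [hg]
    have h0' : (2 * ((I : ℝ) - 1) * (a * c i * ((I : ℝ) - 1) + 1)) * ((2 * a * c i * ((I : ℝ) - 1) - ((I : ℝ) - 2)) / (2 * ((I : ℝ) - 1) * (a * c i * ((I : ℝ) - 1) + 1))) = (2 * a * c i * ((I : ℝ) - 1) - ((I : ℝ) - 2)) := mul_div_cancel₀ _ hd
    linear_combination (2 * ((I : ℝ) - 1) * (a * c i * ((I : ℝ) - 1) + 1)) * (hexp.symm.trans (h i)) + (s - t i) * h0'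
  have hIpos : (0 : ℝ) < (I : ℝ) := by
    have : (2 : ℝ) ≤ (I : ℝ) := by exact_mod_cast hI
    linarith
  have hts : ∀ i, t i = (g i - ((I : ℝ) - 1)) / ((I : ℝ) * g i) * s := by
    intro i
    have hIg : (I : ℝ) * g i ≠ 0 := ne_of_gt (mul_pos hIpos (hgpos i))
    rw [div_mul_eq_mul_div, eq_div_iff hIg]
    linear_combination key i
  have hr : ∀ i, (g i - ((I : ℝ) - 1)) / ((I : ℝ) * g i) < 1 / (I : ℝ) := by
    intro i
    rw [div_lt_div_iff₀ (mul_pos hIpos (hgpos i)) hIpos]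
    nlinarith [hgpos i]
  have hsum_r : ∑ i, (g i - ((I : ℝ) - 1)) / ((I : ℝ) * g i) < 1 := by
    have hne : (Finset.univ : Finset (Fin I)).Nonempty := by
      have : 0 < I := by omega
      exact ⟨⟨0, this⟩, Finset.mem_univ _⟩
    calc ∑ i, (g i - ((I : ℝ) - 1)) / ((I : ℝ) * g i)
        < ∑ _i : Fin I, 1 / (I : ℝ) := Finset.sum_lt_sum_of_nonempty hne fun i _ => hr i
      _ = 1 := by
          rw [Finset.sum_const, Finset.card_univ, Fintype.card_fin, nsmul_eq_mul]
          field_simp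
  have hseq : s = (∑ i, (g i - ((I : ℝ) - 1)) / ((I : ℝ) * g i)) * s := by
    conv_lhs => rw [hs]
    rw [Finset.sum_congr rfl fun i _ => hts i, ← Finset.sum_mul]
  have hs0 : s = 0 := by
    have h1 : s * (1 - ∑ i, (g i - ((I : ℝ) - 1)) / ((I : ℝ) * g i)) = 0 := by
      linear_combination hseq
    rcases mul_eq_zero.mp h1 with h' | h'
    · exact h'
    · linarith
  funext i
  simp [hts i, hs0]

/-- under Assumption A1, the spectral radius of `Q` is strictly less than 1. -/
theorem stmt_4
    (I : ℕ) (hI : 2 ≤ I) (a : ℝ) (ha : 0 < a)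
    (c : Fin I → ℝ) (hc : ∀ i, 0 < c i)
    (W : Matrix (Fin I) (Fin I) ℝ) (hWsym : W.IsSymm) (hWdiag : ∀ i, W i i = 0)
    (hW01 : ∀ i j, W i j = 0 ∨ W i j = 1)
    (ω : ℝ) (hω0 : 0 ≤ ω) (hω1 : ∀ i, ω ≤ 1 / (1 + ∑ j, W i j))
    (hconn : ∀ v : Fin I → ℝ, (lap I ω W) *ᵥ v = 0 → ∃ t : ℝ, v = fun _ => t)
    (lamBar lamLow : ℝ) (hlamLow0 : 0 < lamLow)
    (hlamBarUB : ∀ lam ∈ spectrum ℝ (lap I ω W), lam ≤ lamBar)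
    (hlamBarMem : lamBar ∈ spectrum ℝ (lap I ω W))
    (hlamLowLB : ∀ lam ∈ spectrum ℝ (lap I ω W), lam ≠ 0 → lamLow ≤ lam)
    (hlamLowMem : lamLow ∈ spectrum ℝ (lap I ω W))
    (fBar fLow : ℝ)
    (hfBarUB : ∀ i, Real.sqrt (∑ j, fvec I a c i j ^ 2) ≤ fBar)
    (hfBarMem : ∃ i, Real.sqrt (∑ j, fvec I a c i j ^ 2) = fBar)
    (hfLowLB : ∀ i, fLow ≤ Real.sqrt (∑ j, fvec I a c i j ^ 2))
    (hfLowMem : ∃ i, Real.sqrt (∑ j, fvec I a c i j ^ 2) = fLow)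
    (α : ℝ) (hα0 : 0 < α) (hα1 : α < (2 - lamBar) / (3 * fBar ^ 2))
    (hα2 : fBar ≠ fLow → α < lamLow * fLow ^ 2 / (2 * (fBar ^ 4 - fLow ^ 4)))
    : specRad (Qmat I a ω α c W) < 1 := by
  classical
  have hIpos : 0 < I := by omega
  have i0 : Fin I := ⟨0, hIpos⟩
  set L := lap I ω W with hLdef
  -- symmetry facts
  have hLsymm : Lᵀ = L := by
    rw [hLdef, lap, Matrix.transpose_smul, Matrix.transpose_sub, Matrix.diagonal_transpose,
      hWsym.eq]
  have hLherm : L.IsHermitian := by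
    rw [Matrix.IsHermitian, Matrix.conjTranspose_eq_transpose_of_trivial, hLsymm]
  -- PSD facts
  have hLpsd : L.PosSemidef := by
    refine aux_psd_of_spectrum_nonneg hLherm fun μ hμ => ?_
    by_cases h0 : μ = 0
    · simp [h0]
    · linarith [hlamLowLB μ hμ h0]
  have hL2herm : (lamBar • (1 : Matrix (Fin I) (Fin I) ℝ) - L).IsHermitian := by
    rw [Matrix.IsHermitian, Matrix.conjTranspose_eq_transpose_of_trivial,
      Matrix.transpose_sub, Matrix.transpose_smul, Matrix.transpose_one, hLsymm]
  have hL2psd : (lamBar • (1 : Matrix (Fin I) (Fin I) ℝ) - L).PosSemidef := by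
    refine aux_psd_of_spectrum_nonneg hL2herm fun μ hμ => ?_
    obtain ⟨v, hv, hEq⟩ := (aux_mem_spectrum_iff_eigen _ μ).mp hμ
    rw [Matrix.sub_mulVec, Matrix.smul_mulVec, Matrix.one_mulVec] at hEq
    have hLv : L *ᵥ v = (lamBar - μ) • v := by
      calc L *ᵥ v = lamBar • v - (lamBar • v - L *ᵥ v) := (sub_sub_cancel _ _).symm
        _ = lamBar • v - μ • v := by rw [hEq]
        _ = (lamBar - μ) • v := (sub_smul _ _ _).symm
    have hmem : lamBar - μ ∈ spectrum ℝ L := (aux_mem_spectrum_iff_eigen _ _).mpr ⟨v, hv, hLv⟩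
    linarith [hlamBarUB _ hmem]
  have hLq : ∀ u : Fin I → ℝ, 0 ≤ u ⬝ᵥ (L *ᵥ u) := aux_psd_quad hLpsd
  have hLqUB : ∀ u : Fin I → ℝ, u ⬝ᵥ (L *ᵥ u) ≤ lamBar * (u ⬝ᵥ u) := by
    intro u
    have h0 := aux_psd_quad hL2psd u
    rw [Matrix.sub_mulVec, Matrix.smul_mulVec, Matrix.one_mulVec, dotProduct_sub,
      dotProduct_smul, smul_eq_mul] at h0
    linarith
  -- fBar facts
  have hfsq_ge1 : ∀ i : Fin I, (1 : ℝ) ≤ ∑ j, fvec I a c i j ^ 2 := by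
    intro i
    have h1 : fvec I a c i i = 1 := by simp [fvec, muCoef]
    calc (1 : ℝ) = fvec I a c i i ^ 2 := by rw [h1]; norm_num
      _ ≤ ∑ j, fvec I a c i j ^ 2 :=
        Finset.single_le_sum (f := fun j => fvec I a c i j ^ 2)
          (fun j _ => sq_nonneg _) (Finset.mem_univ i)
  have hfBar1 : (1 : ℝ) ≤ fBar := by
    refine le_trans ?_ (hfBarUB i0)
    rw [show (1 : ℝ) = Real.sqrt 1 from (Real.sqrt_one).symm]
    exact Real.sqrt_le_sqrt (hfsq_ge1 i0)
  have hfBarpos : (0 : ℝ) < fBar := lt_of_lt_of_le one_pos hfBar1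
  have hfsqUB : ∀ i, ∑ j, fvec I a c i j ^ 2 ≤ fBar ^ 2 := by
    intro i
    have hnn : 0 ≤ ∑ j, fvec I a c i j ^ 2 := Finset.sum_nonneg fun j _ => sq_nonneg _
    nlinarith [Real.sq_sqrt hnn, Real.sqrt_nonneg (∑ j, fvec I a c i j ^ 2), hfBarUB i]
  have hαB : lamBar + α * fBar ^ 2 < 2 := by
    have h3 : (0 : ℝ) < 3 * fBar ^ 2 := by positivity
    rw [lt_div_iff₀ h3] at hα1
    nlinarith
  -- bound on every spectral value
  have hbound : ∀ μ ∈ spectrum ℝ (Qmat I a ω α c W), |μ| < 1 := by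
    intro μ hμ
    obtain ⟨v, hv, hQv⟩ := (aux_mem_spectrum_iff_eigen _ μ).mp hμ
    have hvv : 0 < v ⬝ᵥ v := by
      have hnn : 0 ≤ v ⬝ᵥ v := Finset.sum_nonneg fun p _ => mul_self_nonneg (v p)
      rcases hnn.lt_or_eq with h' | h'
      · exact h'
      · exact absurd (dotProduct_self_eq_zero.mp h'.symm) hv
    set w := (blockF I (fvec I a c))ᵀ *ᵥ v with hwdef
    have hquad : μ * (v ⬝ᵥ v)
        = v ⬝ᵥ v - v ⬝ᵥ ((L ⊗ₖ (1 : Matrix (Fin I) (Fin I) ℝ)) *ᵥ v) - α * (w ⬝ᵥ w) := by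
      have h1 : v ⬝ᵥ ((Qmat I a ω α c W) *ᵥ v) = μ * (v ⬝ᵥ v) := by
        rw [hQv, dotProduct_smul, smul_eq_mul]
      rw [← h1, Qmat, Matrix.sub_mulVec, Matrix.sub_mulVec, Matrix.one_mulVec,
        Matrix.smul_mulVec, dotProduct_sub, dotProduct_sub, dotProduct_smul, smul_eq_mul]
      rw [← hLdef]
      congr 2
      rw [hwdef, ← Matrix.mulVec_mulVec, Matrix.dotProduct_mulVec, ← Matrix.mulVec_transpose]
    have hqK := aux_kron_quad L v
    have hwj : ∀ j, w j = ∑ l, fvec I a c j l * v (j, l) := fun j => aux_Ft_apply _ v j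
    have hww : 0 ≤ w ⬝ᵥ w := Finset.sum_nonneg fun p _ => mul_self_nonneg (w p)
    have hqKnn : 0 ≤ v ⬝ᵥ ((L ⊗ₖ (1 : Matrix (Fin I) (Fin I) ℝ)) *ᵥ v) := by
      rw [hqK]
      exact Finset.sum_nonneg fun j _ => hLq _
    -- strict positivity of the sum
    have hpos : 0 < v ⬝ᵥ ((L ⊗ₖ (1 : Matrix (Fin I) (Fin I) ℝ)) *ᵥ v) + α * (w ⬝ᵥ w) := by
      rcases hqKnn.lt_or_eq with h' | h'
      · nlinarith
      rcases (mul_nonneg hα0.le hww).lt_or_eq with h'' | h''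
      · nlinarith
      exfalso
      -- both quadratic pieces vanish
      have hqK0 : ∀ j, (fun i => v (i, j)) ⬝ᵥ (L *ᵥ fun i => v (i, j)) = 0 := by
        have hz : ∑ j, (fun i => v (i, j)) ⬝ᵥ (L *ᵥ fun i => v (i, j)) = 0 := by
          rw [← hqK, ← h']
        intro j
        exact (Finset.sum_eq_zero_iff_of_nonneg fun j _ => hLq _).mp hz j (Finset.mem_univ j)
      have hw0 : w = 0 := by
        have : w ⬝ᵥ w = 0 := by
          rcases mul_eq_zero.mp h''.symm with h | h
          · exact absurd h (ne_of_gt hα0)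
          · exact h
        exact dotProduct_self_eq_zero.mp this
      -- each column is constant
      have hcols : ∀ j, ∃ t : ℝ, (fun i => v (i, j)) = fun _ => t := by
        intro j
        refine hconn _ (aux_psd_quad_zero hLpsd _ (hqK0 j))
      choose t ht using hcols
      have hvt : ∀ i j, v (i, j) = t j := fun i j => congrFun (ht j) i
      have hker : ∀ j, ∑ l, fvec I a c j l * t l = 0 := by
        intro j
        have := congrFun hw0 j
        rw [hwj j] at this
        simpa [hvt] using this
      have ht0 : t = 0 := aux_fvec_ker hI ha hc t hker
      apply hv
      funext p
      have := hvt p.1 p.2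
      rw [ht0] at this
      simpa using this
    -- upper bound μ < 1
    have hup : μ < 1 := by
      have : μ * (v ⬝ᵥ v) < 1 * (v ⬝ᵥ v) := by rw [hquad]; nlinarith
      exact lt_of_mul_lt_mul_right this hvv.le
    -- lower bound -1 < μ
    have hqKUB : v ⬝ᵥ ((L ⊗ₖ (1 : Matrix (Fin I) (Fin I) ℝ)) *ᵥ v) ≤ lamBar * (v ⬝ᵥ v) := by
      rw [hqK, aux_dot_self_cols v, Finset.mul_sum]
      exact Finset.sum_le_sum fun j _ => hLqUB _
    have hwwUB : w ⬝ᵥ w ≤ fBar ^ 2 * (v ⬝ᵥ v) := by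
      have h1 : w ⬝ᵥ w = ∑ j, (∑ l, fvec I a c j l * v (j, l)) ^ 2 := by
        simp only [dotProduct, hwj, sq]
      rw [h1, aux_dot_self_rows v, Finset.mul_sum]
      refine Finset.sum_le_sum fun j _ => ?_
      have hcs := Finset.sum_mul_sq_le_sq_mul_sq Finset.univ (fun l => fvec I a c j l)
        (fun l => v (j, l))
      have hvnn : 0 ≤ ∑ l, v (j, l) * v (j, l) :=
        Finset.sum_nonneg fun l _ => mul_self_nonneg _
      calc (∑ l, fvec I a c j l * v (j, l)) ^ 2
          ≤ (∑ l, fvec I a c j l ^ 2) * ∑ l, v (j, l) ^ 2 := hcs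
        _ ≤ fBar ^ 2 * ∑ l, v (j, l) * v (j, l) := by
            simp only [sq]
            apply mul_le_mul_of_nonneg_right _ hvnn
            simpa [sq] using hfsqUB j
    have hlow : -1 < μ := by
      have h2 : α * (w ⬝ᵥ w) ≤ α * fBar ^ 2 * (v ⬝ᵥ v) := by
        have := mul_le_mul_of_nonneg_left hwwUB hα0.le
        nlinarith
      have : (-1) * (v ⬝ᵥ v) < μ * (v ⬝ᵥ v) := by rw [hquad]; nlinarith
      exact lt_of_mul_lt_mul_right this hvv.le
    exact abs_lt.mpr ⟨hlow, hup⟩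
  -- conclude via the (finite, nonempty) spectrum
  have hQherm : (Qmat I a ω α c W).IsHermitian := by
    rw [Matrix.IsHermitian, Matrix.conjTranspose_eq_transpose_of_trivial, Qmat,
      Matrix.transpose_sub, Matrix.transpose_sub, Matrix.transpose_one, Matrix.transpose_smul,
      Matrix.transpose_mul, Matrix.transpose_transpose]
    rw [show (lap I ω W ⊗ₖ (1 : Matrix (Fin I) (Fin I) ℝ))ᵀ
        = (lap I ω W)ᵀ ⊗ₖ (1 : Matrix (Fin I) (Fin I) ℝ)ᵀ from
      (Matrix.kroneckerMap_transpose _ _ _).symm, ← hLdef, hLsymm, Matrix.transpose_one, hLdef]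
  have hne : (spectrum ℝ (Qmat I a ω α c W)).Nonempty :=
    ⟨_, hQherm.eigenvalues_mem_spectrum_real (i0, i0)⟩
  have hfin : (spectrum ℝ (Qmat I a ω α c W)).Finite := Matrix.finite_spectrum _
  have hmem : sSup (abs '' spectrum ℝ (Qmat I a ω α c W))
      ∈ abs '' spectrum ℝ (Qmat I a ω α c W) :=
    Set.Nonempty.csSup_mem (hne.image _) (hfin.image _)
  obtain ⟨μ, hμ, hEq⟩ := hmem
  rw [specRad, ← hEq]
  exact hbound μ hμ
end
end

section
/- Under Assumption A1, with m₁ := (λ̄ + 4·α·f̄² + √(λ̄² + 4·α²·f̄⁴))/2 − 1, the matrix Q + m₁·I_{I²} is positive definite; consequently every eigenvalue of the symmetric matrix Q is strictly greater than −m₁. -/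
open Matrix MeasureTheory ProbabilityTheory Filter Finset
open scoped Kronecker ENNReal Topology

noncomputable section

-- AUX
lemma aux_quadForm_le {n : Type*} [Fintype n] [DecidableEq n]
    {M : Matrix n n ℝ} (hM : M.IsHermitian) {L : ℝ}
    (h : ∀ lam ∈ spectrum ℝ M, lam ≤ L) (v : n → ℝ) :
    v ⬝ᵥ M *ᵥ v ≤ L * (v ⬝ᵥ v) := by
  set N : Matrix n n ℝ := L • (1 : Matrix n n ℝ) - M with hN
  have hNh : N.IsHermitian := by
    have h1 : (L • (1 : Matrix n n ℝ)).IsHermitian := by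
      unfold Matrix.IsHermitian
      rw [conjTranspose_smul, conjTranspose_one, star_trivial]
    exact h1.sub hM
  have hNspec : ∀ mu ∈ spectrum ℝ N, 0 ≤ mu := by
    intro mu hmu
    have hNe : N = (algebraMap ℝ (Matrix n n ℝ)) L - M := by
      rw [Algebra.algebraMap_eq_smul_one]
    rw [hNe, ← spectrum.singleton_sub_eq, Set.mem_sub] at hmu
    obtain ⟨x, hx, y, hy, hxy⟩ := hmu
    rw [Set.mem_singleton_iff] at hx
    subst hx
    have := h y hy
    linarith [hxy ▸ sub_nonneg.mpr this]
  have hpsd : N.PosSemidef :=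
    hNh.posSemidef_iff_eigenvalues_nonneg.mpr fun i =>
      hNspec _ (hNh.eigenvalues_mem_spectrum_real i)
  have h2 := hpsd.dotProduct_mulVec_nonneg v
  rw [star_trivial] at h2
  have hexp : v ⬝ᵥ N *ᵥ v = L * (v ⬝ᵥ v) - v ⬝ᵥ M *ᵥ v := by
    rw [hN, sub_mulVec, dotProduct_sub, smul_mulVec, one_mulVec,
      dotProduct_smul, smul_eq_mul]
  linarith [hexp ▸ h2]

lemma aux_eigvec {n : Type*} [Fintype n] [DecidableEq n]
    (M : Matrix n n ℝ) {lam : ℝ} (h : lam ∈ spectrum ℝ M) :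
    ∃ v, v ≠ 0 ∧ M *ᵥ v = lam • v := by
  rw [spectrum.mem_iff, Matrix.isUnit_iff_isUnit_det, isUnit_iff_ne_zero, not_not] at h
  obtain ⟨v, hv0, hv⟩ := (Matrix.exists_mulVec_eq_zero_iff).mpr h
  refine ⟨v, hv0, ?_⟩
  rw [sub_mulVec, Algebra.algebraMap_eq_smul_one, smul_mulVec, one_mulVec,
    sub_eq_zero] at hv
  exact hv.symm

set_option maxHeartbeats 1000000 in
/-- under Assumption A1, with `m₁ = (λ̄ + 4 α f̄² + √(λ̄² + 4 α² f̄⁴))/2 - 1`,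
the matrix `Q + m₁ I` is positive definite; hence every eigenvalue of `Q` exceeds `-m₁`. -/
theorem stmt_7
    (I : ℕ) (hI : 2 ≤ I) (a : ℝ) (ha : 0 < a)
    (c : Fin I → ℝ) (hc : ∀ i, 0 < c i)
    (W : Matrix (Fin I) (Fin I) ℝ) (hWsym : W.IsSymm) (hWdiag : ∀ i, W i i = 0)
    (hW01 : ∀ i j, W i j = 0 ∨ W i j = 1)
    (ω : ℝ) (hω0 : 0 ≤ ω) (hω1 : ∀ i, ω ≤ 1 / (1 + ∑ j, W i j))
    (hconn : ∀ v : Fin I → ℝ, (lap I ω W) *ᵥ v = 0 → ∃ t : ℝ, v = fun _ => t)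
    (lamBar lamLow : ℝ) (hlamLow0 : 0 < lamLow)
    (hlamBarUB : ∀ lam ∈ spectrum ℝ (lap I ω W), lam ≤ lamBar)
    (hlamBarMem : lamBar ∈ spectrum ℝ (lap I ω W))
    (hlamLowLB : ∀ lam ∈ spectrum ℝ (lap I ω W), lam ≠ 0 → lamLow ≤ lam)
    (hlamLowMem : lamLow ∈ spectrum ℝ (lap I ω W))
    (fBar fLow : ℝ)
    (hfBarUB : ∀ i, Real.sqrt (∑ j, fvec I a c i j ^ 2) ≤ fBar)
    (hfBarMem : ∃ i, Real.sqrt (∑ j, fvec I a c i j ^ 2) = fBar)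
    (hfLowLB : ∀ i, fLow ≤ Real.sqrt (∑ j, fvec I a c i j ^ 2))
    (hfLowMem : ∃ i, Real.sqrt (∑ j, fvec I a c i j ^ 2) = fLow)
    (α : ℝ) (hα0 : 0 < α) (hα1 : α < (2 - lamBar) / (3 * fBar ^ 2))
    (hα2 : fBar ≠ fLow → α < lamLow * fLow ^ 2 / (2 * (fBar ^ 4 - fLow ^ 4)))
    : (Qmat I a ω α c W
        + ((lamBar + 4 * α * fBar ^ 2 + Real.sqrt (lamBar ^ 2 + 4 * α ^ 2 * fBar ^ 4)) / 2 - 1)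
            • (1 : Matrix (Fin I × Fin I) (Fin I × Fin I) ℝ)).PosDef
      ∧ ∀ lam ∈ spectrum ℝ (Qmat I a ω α c W),
          -((lamBar + 4 * α * fBar ^ 2 + Real.sqrt (lamBar ^ 2 + 4 * α ^ 2 * fBar ^ 4)) / 2 - 1)
            < lam := by
  set L : Matrix (Fin I) (Fin I) ℝ := lap I ω W with hLdef
  set Fm : Matrix (Fin I × Fin I) (Fin I) ℝ := blockF I (fvec I a c) with hFdef
  set m : ℝ := (lamBar + 4 * α * fBar ^ 2
      + Real.sqrt (lamBar ^ 2 + 4 * α ^ 2 * fBar ^ 4)) / 2 - 1 with hmdef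
  -- basic facts
  have hlamBar0 : 0 < lamBar := lt_of_lt_of_le hlamLow0 (hlamBarUB lamLow hlamLowMem)
  have hfBar1 : 1 ≤ fBar := by
    obtain ⟨i, hi⟩ := hfBarMem
    have hii : fvec I a c i i = 1 := by simp [fvec, muCoef]
    have hle : (1:ℝ) ≤ ∑ j, fvec I a c i j ^ 2 := by
      have := Finset.single_le_sum (f := fun j => fvec I a c i j ^ 2)
        (fun j _ => sq_nonneg _) (Finset.mem_univ i)
      simpa [hii] using this
    calc (1:ℝ) = Real.sqrt 1 := (Real.sqrt_one).symm
      _ ≤ Real.sqrt (∑ j, fvec I a c i j ^ 2) := Real.sqrt_le_sqrt hle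
      _ = fBar := hi
  have hfBar2 : 0 < fBar ^ 2 := by positivity
  -- key numeric inequality : 1 + m > lamBar + α fBar²
  have hkey : lamBar + α * fBar ^ 2 < 1 + m := by
    set s0 := Real.sqrt (lamBar ^ 2 + 4 * α ^ 2 * fBar ^ 4) with hs0def
    have hs0nn : 0 ≤ s0 := Real.sqrt_nonneg _
    have hs0sq : s0 ^ 2 = lamBar ^ 2 + 4 * α ^ 2 * fBar ^ 4 := by
      rw [hs0def, Real.sq_sqrt]; positivity
    have hprod : 0 < α * fBar ^ 2 * lamBar := by positivity
    rw [hmdef]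
    nlinarith [hs0nn, hs0sq, hprod, sq_nonneg (s0 - lamBar)]
  -- Hermitian facts
  have hLh : L.IsHermitian := by
    unfold Matrix.IsHermitian
    rw [conjTranspose_eq_transpose_of_trivial, hLdef]
    unfold lap
    rw [transpose_smul, transpose_sub, diagonal_transpose, hWsym.eq]
  have hLsym : Lᵀ = L := by
    rw [← conjTranspose_eq_transpose_of_trivial]; exact hLh
  have hKh : (L ⊗ₖ (1 : Matrix (Fin I) (Fin I) ℝ)).IsHermitian := by
    unfold Matrix.IsHermitian
    rw [conjTranspose_eq_transpose_of_trivial]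
    rw [show (L ⊗ₖ (1 : Matrix (Fin I) (Fin I) ℝ))ᵀ
        = Lᵀ ⊗ₖ (1 : Matrix (Fin I) (Fin I) ℝ)ᵀ from
      (kroneckerMap_transpose _ _ _).symm, hLsym, transpose_one]
  have hFFh : (Fm * Fmᵀ).IsHermitian := by
    unfold Matrix.IsHermitian
    rw [conjTranspose_eq_transpose_of_trivial, transpose_mul, transpose_transpose]
  have hQh : (Qmat I a ω α c W).IsHermitian := by
    unfold Qmat
    refine ((isHermitian_one.sub hKh).sub ?_)
    unfold Matrix.IsHermitian
    rw [conjTranspose_smul, star_trivial, hFFh.eq]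
  -- quadratic form of Kronecker part
  have hKq : ∀ v : Fin I × Fin I → ℝ,
      v ⬝ᵥ (L ⊗ₖ (1 : Matrix (Fin I) (Fin I) ℝ)) *ᵥ v ≤ lamBar * (v ⬝ᵥ v) := by
    intro v
    have hdecomp : v ⬝ᵥ (L ⊗ₖ (1 : Matrix (Fin I) (Fin I) ℝ)) *ᵥ v
        = ∑ k, (fun i => v (i, k)) ⬝ᵥ L *ᵥ (fun i => v (i, k)) := by
      simp only [dotProduct, mulVec, kroneckerMap_apply, Matrix.one_apply,
        Fintype.sum_prod_type, mul_ite, mul_one, mul_zero, ite_mul, zero_mul,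
        Finset.sum_ite_eq, Finset.mem_univ, if_true]
      rw [Finset.sum_comm]
    have hnorm : v ⬝ᵥ v = ∑ k, (fun i => v (i, k)) ⬝ᵥ (fun i => v (i, k)) := by
      simp only [dotProduct, Fintype.sum_prod_type]
      rw [Finset.sum_comm]
    rw [hdecomp, hnorm, Finset.mul_sum]
    exact Finset.sum_le_sum fun k _ =>
      aux_quadForm_le hLh hlamBarUB (fun i => v (i, k))
  -- quadratic form of F Fᵀ part
  have hFq : ∀ v : Fin I × Fin I → ℝ,
      v ⬝ᵥ (Fm * Fmᵀ) *ᵥ v = ∑ j, (∑ k, fvec I a c j k * v (j, k)) ^ 2 := by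
    intro v
    rw [← mulVec_mulVec, dotProduct_mulVec, ← mulVec_transpose]
    have hw : Fmᵀ *ᵥ v = fun j => ∑ k, fvec I a c j k * v (j, k) := by
      ext j
      simp only [mulVec, dotProduct, transpose_apply, hFdef, blockF, Matrix.of_apply,
        Fintype.sum_prod_type, ite_mul, zero_mul, Finset.sum_ite_eq, Finset.mem_univ, if_true]
      rw [Finset.sum_comm]
      simp [Finset.sum_ite_eq, Finset.mem_univ]
    rw [hw]
    simp [dotProduct, pow_two]
  have hFqle : ∀ v : Fin I × Fin I → ℝ,
      v ⬝ᵥ (Fm * Fmᵀ) *ᵥ v ≤ fBar ^ 2 * (v ⬝ᵥ v) := by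
    intro v
    rw [hFq v]
    have hnorm : v ⬝ᵥ v = ∑ j, ∑ k, v (j, k) ^ 2 := by
      simp only [dotProduct, Fintype.sum_prod_type, pow_two]
    rw [hnorm, Finset.mul_sum]
    refine Finset.sum_le_sum fun j _ => ?_
    have hCS := Finset.sum_mul_sq_le_sq_mul_sq Finset.univ
      (fun k => fvec I a c j k) (fun k => v (j, k))
    have hnn : (0:ℝ) ≤ ∑ k, fvec I a c j k ^ 2 :=
      Finset.sum_nonneg fun k _ => sq_nonneg _
    have hf2 : ∑ k, fvec I a c j k ^ 2 ≤ fBar ^ 2 := by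
      have h1 := hfBarUB j
      nlinarith [Real.sq_sqrt hnn, Real.sqrt_nonneg (∑ k, fvec I a c j k ^ 2)]
    have hvnn : (0:ℝ) ≤ ∑ k, v (j, k) ^ 2 :=
      Finset.sum_nonneg fun k _ => sq_nonneg _
    nlinarith
  have hFq0 : ∀ v : Fin I × Fin I → ℝ, 0 ≤ v ⬝ᵥ (Fm * Fmᵀ) *ᵥ v := by
    intro v; rw [hFq v]; exact Finset.sum_nonneg fun j _ => sq_nonneg _
  -- expansion of the quadratic form of Q + m • 1
  have hexp : ∀ v : Fin I × Fin I → ℝ,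
      v ⬝ᵥ (Qmat I a ω α c W + m • (1 : Matrix (Fin I × Fin I) (Fin I × Fin I) ℝ)) *ᵥ v
        = (1 + m) * (v ⬝ᵥ v) - v ⬝ᵥ (L ⊗ₖ (1 : Matrix (Fin I) (Fin I) ℝ)) *ᵥ v
          - α * (v ⬝ᵥ (Fm * Fmᵀ) *ᵥ v) := by
    intro v
    unfold Qmat
    rw [add_mulVec, sub_mulVec, sub_mulVec, smul_mulVec, smul_mulVec,
      one_mulVec, dotProduct_add, dotProduct_sub, dotProduct_sub,
      dotProduct_smul, dotProduct_smul, smul_eq_mul, smul_eq_mul]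
    ring
  -- positive definiteness
  have hPD : (Qmat I a ω α c W
      + m • (1 : Matrix (Fin I × Fin I) (Fin I × Fin I) ℝ)).PosDef := by
    refine Matrix.PosDef.of_dotProduct_mulVec_pos ?_ ?_
    · have h1 : (m • (1 : Matrix (Fin I × Fin I) (Fin I × Fin I) ℝ)).IsHermitian := by
        unfold Matrix.IsHermitian
        rw [conjTranspose_smul, conjTranspose_one, star_trivial]
      exact hQh.add h1
    · intro v hv
      rw [star_trivial, hexp v]
      have hvv : 0 < v ⬝ᵥ v := by
        have h1 : v ⬝ᵥ v = ∑ p, v p ^ 2 := by simp [dotProduct, pow_two]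
        have h2 : 0 ≤ v ⬝ᵥ v := by rw [h1]; positivity
        rcases h2.lt_or_eq with h | h
        · exact h
        · exact absurd (dotProduct_self_eq_zero.mp h.symm) hv
      have h3 := hKq v
      have h4 := hFqle v
      have h5 := hFq0 v
      nlinarith [mul_pos (sub_pos.mpr hkey) hvv]
  refine ⟨hPD, ?_⟩
  intro lam hlam
  obtain ⟨v, hv0, hv⟩ := aux_eigvec _ hlam
  have := hPD.dotProduct_mulVec_pos hv0
  rw [star_trivial, add_mulVec, smul_mulVec, one_mulVec, hv,
    dotProduct_add, dotProduct_smul, dotProduct_smul, smul_eq_mul, smul_eq_mul] at this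
  have hvv : 0 < v ⬝ᵥ v := by
    have h1 : v ⬝ᵥ v = ∑ p, v p ^ 2 := by simp [dotProduct, pow_two]
    have h2 : 0 ≤ v ⬝ᵥ v := by rw [h1]; positivity
    rcases h2.lt_or_eq with h | h
    · exact h
    · exact absurd (dotProduct_self_eq_zero.mp h.symm) hv0
  nlinarith
end
end

section
/- For each i define U_i(b) = −c_i·(d_i + S/I − b_i)² − (S/(I·a))·(b_i − S/I), where S = Σ_{j=1}^I b_j, and let k_i = 2·(I−1)·(a·c_i·(I−1)+1)/(a·I²) > 0. Then for every i there exists a function h_i depending only on (b_j)_{j≠i} (and on the fixed parameters a, c_i, d_i, I) such that U_i(b) = k_i·Γ_i(b) + h_i(b_{−i}) for all b ∈ ℝ^I. Consequently, for each fixed b_{−i} the maximizers over b_i ∈ ℝ of b_i ↦ U_i(b_i, b_{−i}) and of b_i ↦ Γ_i(b_i, b_{−i}) coincide, so the game with payoffs U_i and the game with payoffs Γ_i have the same Nash equilibria. -/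
open Matrix MeasureTheory ProbabilityTheory Filter Finset
open scoped Kronecker ENNReal Topology

noncomputable section

lemma payoff_update_eq (I : ℕ) (a : ℝ) (c d : Fin I → ℝ) (i : Fin I)
    (b : Fin I → ℝ) (x : ℝ) :
    payoff I a c d i (Function.update b i x)
      = -(1/2) * x ^ 2 + betaCoef I a c d i * x
        + ((2 * a * c i * ((I : ℝ) - 1) - ((I : ℝ) - 2)) /
            (2 * ((I : ℝ) - 1) * (a * c i * ((I : ℝ) - 1) + 1)))
          * (x * ∑ j ∈ Finset.univ.erase i, b j) := by
  unfold payoff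
  rw [Function.update_self]
  congr 1
  rw [Finset.mul_sum, Finset.mul_sum]
  apply Finset.sum_congr rfl
  intro j hj
  have hji : j ≠ i := Finset.ne_of_mem_erase hj
  rw [Function.update_of_ne hji, muCoef, if_neg hji]

lemma Upay_update_eq (I : ℕ) (a : ℝ) (c d : Fin I → ℝ) (i : Fin I)
    (b : Fin I → ℝ) (x : ℝ) :
    Upay I a c d i (Function.update b i x)
      = -(c i) * (d i + (x + ∑ j ∈ Finset.univ.erase i, b j) / (I : ℝ) - x) ^ 2
        - ((x + ∑ j ∈ Finset.univ.erase i, b j) / ((I : ℝ) * a))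
          * (x - (x + ∑ j ∈ Finset.univ.erase i, b j) / (I : ℝ)) := by
  have hs : ∑ j, Function.update b i x j = x + ∑ j ∈ Finset.univ.erase i, b j := by
    rw [Finset.sum_update_of_mem (Finset.mem_univ i)]
    rw [Finset.sdiff_singleton_eq_erase]
  unfold Upay
  rw [hs, Function.update_self]

lemma key_diff (I : ℕ) (hI : 2 ≤ I) (a : ℝ) (ha : 0 < a)
    (c : Fin I → ℝ) (hc : ∀ i, 0 < c i) (d : Fin I → ℝ) (i : Fin I)
    (b : Fin I → ℝ) (x y : ℝ) :
    Upay I a c d i (Function.update b i x)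
      - (2 * ((I : ℝ) - 1) * (a * c i * ((I : ℝ) - 1) + 1) / (a * (I : ℝ) ^ 2))
        * payoff I a c d i (Function.update b i x)
    = Upay I a c d i (Function.update b i y)
      - (2 * ((I : ℝ) - 1) * (a * c i * ((I : ℝ) - 1) + 1) / (a * (I : ℝ) ^ 2))
        * payoff I a c d i (Function.update b i y) := by
  have hn : (2:ℝ) ≤ (I:ℝ) := by exact_mod_cast hI
  have hn1 : ((I : ℝ) - 1) ≠ 0 := by linarith
  have hn0 : (I : ℝ) ≠ 0 := by linarith
  have ha0 : a ≠ 0 := ne_of_gt ha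
  have hD : (a * c i * ((I : ℝ) - 1) + 1) ≠ 0 := by
    have := mul_pos (mul_pos ha (hc i)) (show (0:ℝ) < (I:ℝ) - 1 by linarith)
    linarith
  rw [payoff_update_eq, payoff_update_eq, Upay_update_eq, Upay_update_eq]
  unfold betaCoef
  have hD' : 1 + c i * (I:ℝ) * a - c i * a ≠ 0 := by intro h; apply hD; linarith
  field_simp
  ring_nf
  field_simp
  ring

/-- `U_i = k_i Γ_i + h_i(b_{-i})` with
`k_i = 2 (I-1)(a c_i (I-1) + 1)/(a I²) > 0`, so the coordinate-wise maximizers of `U_i` and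
`Γ_i` coincide, and both games have the same Nash equilibria. -/
theorem stmt_10 (I : ℕ) (hI : 2 ≤ I) (a : ℝ) (ha : 0 < a)
    (c : Fin I → ℝ) (hc : ∀ i, 0 < c i) (d : Fin I → ℝ) :
    (∀ i : Fin I, 0 < 2 * ((I : ℝ) - 1) * (a * c i * ((I : ℝ) - 1) + 1) / (a * (I : ℝ) ^ 2))
    ∧ (∀ i : Fin I, ∃ h : (Fin I → ℝ) → ℝ,
        (∀ b b' : Fin I → ℝ, (∀ j, j ≠ i → b j = b' j) → h b = h b')
        ∧ ∀ b : Fin I → ℝ,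
            Upay I a c d i b
              = (2 * ((I : ℝ) - 1) * (a * c i * ((I : ℝ) - 1) + 1) / (a * (I : ℝ) ^ 2))
                  * payoff I a c d i b + h b)
    ∧ (∀ (i : Fin I) (b : Fin I → ℝ),
        (∀ x : ℝ, Upay I a c d i (Function.update b i x) ≤ Upay I a c d i b)
          ↔ (∀ x : ℝ, payoff I a c d i (Function.update b i x) ≤ payoff I a c d i b))
    ∧ (∀ b : Fin I → ℝ,
        (∀ (i : Fin I) (x : ℝ), Upay I a c d i (Function.update b i x) ≤ Upay I a c d i b)
          ↔ (∀ (i : Fin I) (x : ℝ),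
              payoff I a c d i (Function.update b i x) ≤ payoff I a c d i b)) := by
  have hn : (2:ℝ) ≤ (I:ℝ) := by exact_mod_cast hI
  have hk : ∀ i : Fin I,
      0 < 2 * ((I : ℝ) - 1) * (a * c i * ((I : ℝ) - 1) + 1) / (a * (I : ℝ) ^ 2) := by
    intro i
    have h1 : (0:ℝ) < (I:ℝ) - 1 := by linarith
    have h2 : (0:ℝ) < a * c i * ((I:ℝ) - 1) + 1 := by
      have := mul_pos (mul_pos ha (hc i)) h1
      linarith
    have h3 : (0:ℝ) < a * (I:ℝ) ^ 2 := by positivity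
    positivity
  -- the decomposition
  have hdec : ∀ i : Fin I, ∃ h : (Fin I → ℝ) → ℝ,
      (∀ b b' : Fin I → ℝ, (∀ j, j ≠ i → b j = b' j) → h b = h b')
      ∧ ∀ b : Fin I → ℝ,
          Upay I a c d i b
            = (2 * ((I : ℝ) - 1) * (a * c i * ((I : ℝ) - 1) + 1) / (a * (I : ℝ) ^ 2))
                * payoff I a c d i b + h b := by
    intro i
    refine ⟨fun b => Upay I a c d i b
        - (2 * ((I : ℝ) - 1) * (a * c i * ((I : ℝ) - 1) + 1) / (a * (I : ℝ) ^ 2))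
          * payoff I a c d i b, ?_, fun b => by ring⟩
    intro b b' hbb'
    have hb : b = Function.update b' i (b i) := by
      funext j
      by_cases hji : j = i
      · subst hji; rw [Function.update_self]
      · rw [Function.update_of_ne hji]; exact hbb' j hji
    have hb' : b' = Function.update b' i (b' i) := (Function.update_eq_self i b').symm
    rw [hb]
    conv_rhs => rw [hb']
    exact key_diff I hI a ha c hc d i b' (b i) (b' i)
  refine ⟨hk, hdec, ?_, ?_⟩
  · intro i b
    obtain ⟨h, hinv, heq⟩ := hdec i
    have hhx : ∀ x : ℝ, h (Function.update b i x) = h b := by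
      intro x
      apply hinv
      intro j hji
      exact Function.update_of_ne hji x b
    constructor
    · intro H x
      have := H x
      rw [heq, heq, hhx] at this
      have h2 : (2 * ((I : ℝ) - 1) * (a * c i * ((I : ℝ) - 1) + 1) / (a * (I : ℝ) ^ 2))
          * payoff I a c d i (Function.update b i x)
          ≤ (2 * ((I : ℝ) - 1) * (a * c i * ((I : ℝ) - 1) + 1) / (a * (I : ℝ) ^ 2))
          * payoff I a c d i b := by linarith
      exact le_of_mul_le_mul_left h2 (hk i)
    · intro H x
      have h2 := mul_le_mul_of_nonneg_left (H x) (le_of_lt (hk i))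
      rw [heq, heq, hhx]
      linarith
  · intro b
    constructor
    · intro H i x
      obtain ⟨h, hinv, heq⟩ := hdec i
      have hhx : h (Function.update b i x) = h b :=
        hinv _ _ (fun j hji => Function.update_of_ne hji x b)
      have := H i x
      rw [heq, heq, hhx] at this
      have h2 : (2 * ((I : ℝ) - 1) * (a * c i * ((I : ℝ) - 1) + 1) / (a * (I : ℝ) ^ 2))
          * payoff I a c d i (Function.update b i x)
          ≤ (2 * ((I : ℝ) - 1) * (a * c i * ((I : ℝ) - 1) + 1) / (a * (I : ℝ) ^ 2))
          * payoff I a c d i b := by linarith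
      exact le_of_mul_le_mul_left h2 (hk i)
    · intro H i x
      obtain ⟨h, hinv, heq⟩ := hdec i
      have hhx : h (Function.update b i x) = h b :=
        hinv _ _ (fun j hji => Function.update_of_ne hji x b)
      have h2 := mul_le_mul_of_nonneg_left (H i x) (le_of_lt (hk i))
      rw [heq, heq, hhx]
      linarith
end
end
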